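/- arXiv:1502.07434 — 6 statements merged into one kernel-verified Lean document; each statement's English description precedes it below -/
import Mathlib

section
/- Let b : ℝ → ℝ be a nonnegative L-periodic function with supp b ∩ [-L/2, L/2] ⊂ (-ε, ε), ∫_{-L/2}^{L/2} b = L, and sup b ≤ c L/ε. If u is an L-periodic H¹ function with ∫_{-L/2}^{L/2} b(x) u(x) dx = 0, then ∫_{-L/2}^{L/2} b(x) u(x)² dx ≤ c₀ ε L ∫_{-L/2}^{L/2} u_x(x)² dx for some universal constant c₀ > 0. -/
open Set MeasureTheory intervalIntegral

/-- Cauchy–Schwarz for interval integrals, proved via AM–GM. -/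
lemma sq_int_le (f : ℝ → ℝ) (a b : ℝ) (hab : a ≤ b)
    (hf : IntervalIntegrable f volume a b)
    (hf2 : IntervalIntegrable (fun x => f x ^ 2) volume a b) :
    (∫ x in a..b, f x) ^ 2 ≤ (b - a) * ∫ x in a..b, f x ^ 2 := by
  rcases eq_or_lt_of_le hab with rfl | hlt
  · simp
  set A := ∫ x in a..b, f x ^ 2 with hA
  have hA0 : 0 ≤ A := intervalIntegral.integral_nonneg hab (fun x _ => sq_nonneg _)
  have key : ∀ t : ℝ, 0 < t → |∫ x in a..b, f x| ≤ (t * A + (b - a) / t) / 2 := by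
    intro t ht
    have h1 : |∫ x in a..b, f x| ≤ ∫ x in a..b, |f x| :=
      intervalIntegral.abs_integral_le_integral_abs hab
    have h2 : (∫ x in a..b, |f x|) ≤ ∫ x in a..b, (t * f x ^ 2 + 1 / t) / 2 := by
      apply intervalIntegral.integral_mono_on hab hf.abs
      · exact ((hf2.const_mul t).add intervalIntegrable_const).div_const 2
      · intro x _
        have htt : t * (1 / t) = 1 := mul_one_div_cancel ht.ne'
        nlinarith [sq_nonneg (t * |f x| - 1), abs_nonneg (f x), sq_abs (f x), mul_pos ht ht]
    have h3 : (∫ x in a..b, (t * f x ^ 2 + 1 / t) / 2) = (t * A + (b - a) / t) / 2 := by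
      rw [intervalIntegral.integral_div,
        intervalIntegral.integral_add (hf2.const_mul t) intervalIntegrable_const,
        intervalIntegral.integral_const_mul, intervalIntegral.integral_const, smul_eq_mul]
      ring
    linarith [h1.trans (h2.trans_eq h3)]
  set S := |∫ x in a..b, f x| with hS
  have hS0 : 0 ≤ S := abs_nonneg _
  have goal : S ^ 2 ≤ (b - a) * A := by
    rcases eq_or_lt_of_le hA0 with hA0' | hApos
    · -- A = 0 : show S = 0
      have hSz : S = 0 := by
        by_contra h
        have hSpos : 0 < S := lt_of_le_of_ne hS0 (Ne.symm h)
        have := key ((b - a) / S) (div_pos (by linarith) hSpos)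
        rw [← hA0'] at this
        have hba : 0 < b - a := by linarith
        have : S ≤ S / 2 := by
          field_simp at this ⊢
          nlinarith
        linarith
      rw [hSz, ← hA0']; nlinarith
    · set t := Real.sqrt ((b - a) / A) with ht
      have htpos : 0 < t := Real.sqrt_pos.mpr (div_pos (by linarith) hApos)
      have ht2 : t ^ 2 = (b - a) / A := Real.sq_sqrt (le_of_lt (div_pos (by linarith) hApos))
      have ht2A : t ^ 2 * A = b - a := by rw [ht2]; field_simp
      have hk := key t htpos
      have hba : (b - a) / t = t * A := by
        rw [← ht2A]; field_simp
      rw [hba] at hk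
      have : S ≤ t * A := by linarith
      nlinarith
  calc (∫ x in a..b, f x) ^ 2 = S ^ 2 := (sq_abs _).symm
    _ ≤ (b - a) * A := goal


lemma deriv_intInt (u : ℝ → ℝ) (a b : ℝ)
    (hI : IntervalIntegrable (fun t => deriv u t ^ 2) volume a b) :
    IntervalIntegrable (deriv u) volume a b := by
  have hmeas : AEStronglyMeasurable (deriv u) (volume.restrict (Set.uIoc a b)) :=
    (measurable_deriv u).aestronglyMeasurable
  have hg : IntervalIntegrable (fun t => 1 + deriv u t ^ 2) volume a b :=
    intervalIntegrable_const.add hI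
  apply hg.mono_fun hmeas
  filter_upwards with t
  have := sq_nonneg (|deriv u t| - 1)
  simp only [Real.norm_eq_abs]
  rw [abs_of_nonneg (by positivity : (0:ℝ) ≤ 1 + deriv u t ^ 2)]
  nlinarith [sq_abs (deriv u t), abs_nonneg (deriv u t)]

lemma diff_sq_le (u : ℝ → ℝ) (hu : Differentiable ℝ u) (a b x y : ℝ)
    (hab : a ≤ b) (hx : x ∈ Icc a b) (hy : y ∈ Icc a b)
    (hI : IntervalIntegrable (fun t => deriv u t ^ 2) volume a b) :
    (u x - u y) ^ 2 ≤ (b - a) * ∫ t in a..b, deriv u t ^ 2 := by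
  have key : ∀ p q : ℝ, p ∈ Icc a b → q ∈ Icc a b → p ≤ q →
      (u q - u p) ^ 2 ≤ (b - a) * ∫ t in a..b, deriv u t ^ 2 := by
    intro p q hp hq hpq
    have hsub : Set.uIcc p q ⊆ Set.uIcc a b := by
      rw [Set.uIcc_of_le hpq, Set.uIcc_of_le hab]
      exact Set.Icc_subset_Icc hp.1 hq.2
    have hI' : IntervalIntegrable (fun t => deriv u t ^ 2) volume p q :=
      hI.mono_set hsub
    have hd : IntervalIntegrable (deriv u) volume p q := deriv_intInt u p q hI'
    have hftc : (∫ t in p..q, deriv u t) = u q - u p :=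
      intervalIntegral.integral_deriv_eq_sub (fun t _ => hu t) hd
    have hcs := sq_int_le (deriv u) p q hpq hd hI'
    rw [hftc] at hcs
    have hmono : (∫ t in p..q, deriv u t ^ 2) ≤ ∫ t in a..b, deriv u t ^ 2 := by
      apply intervalIntegral.integral_mono_interval hp.1 hpq hq.2 _ hI
      filter_upwards with t using sq_nonneg _
    have h1 : 0 ≤ ∫ t in p..q, deriv u t ^ 2 :=
      intervalIntegral.integral_nonneg hpq (fun t _ => sq_nonneg _)
    nlinarith [hp.1, hq.2, sq_nonneg (u q - u p)]
  rcases le_total y x with h | h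
  · exact key y x hy hx h
  · have := key x y hx hy h
    nlinarith [this]

/-- Goodman's Poincaré-type inequality (Proposition 2.2): given the fixed constant
`c > 0` in the sup bound for the bump function, there is a universal constant
`c₀ > 0` such that for every period `L`, every `0 < ε < L/2`, every nonnegative
`L`-periodic bump function `b` supported (within one period) in `(-ε, ε)`, with
mean value `L` and sup bound `c L / ε`, and every `L`-periodic `H¹` function `u`
with `∫ b u = 0`, one has `∫ b u² ≤ c₀ ε L ∫ (u')²`. -/
theorem goodman_poincare_inequality (c : ℝ) (hc : 0 < c) :
    ∃ c₀ : ℝ, 0 < c₀ ∧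
      ∀ (L ε : ℝ) (b u : ℝ → ℝ),
        0 < L → 0 < ε → ε < L / 2 →
        (∀ x, 0 ≤ b x) →
        Function.Periodic b L →
        (∀ x ∈ Icc (-(L / 2)) (L / 2), b x ≠ 0 → x ∈ Ioo (-ε) ε) →
        (∫ x in (-(L / 2))..(L / 2), b x) = L →
        (∀ x, b x ≤ c * L / ε) →
        Function.Periodic u L →
        Differentiable ℝ u →
        IntervalIntegrable (fun x => (deriv u x) ^ 2) volume (-(L / 2)) (L / 2) →
        (∫ x in (-(L / 2))..(L / 2), b x * u x) = 0 →
        (∫ x in (-(L / 2))..(L / 2), b x * (u x) ^ 2) ≤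
          c₀ * ε * L * ∫ x in (-(L / 2))..(L / 2), (deriv u x) ^ 2 := by
  refine ⟨2, by norm_num, ?_⟩
  intro L ε b u hL hε hεL hb_nonneg _hbper hsupp hmean hbsup _huper hu hI' hbu0
  set D := L / 2 with hD
  have hDpos : 0 < D := by positivity
  have hεD : ε < D := hεL
  have hDD : -D ≤ D := by linarith
  have hεIcc : Icc (-ε) ε ⊆ Icc (-D) D := Icc_subset_Icc (by linarith) (by linarith)
  -- b is interval integrable
  have hb_int : IntervalIntegrable b volume (-D) D := by
    by_contra h
    rw [intervalIntegral.integral_undef h] at hmean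
    linarith
  have hu_cont : Continuous u := hu.continuous
  have hbu_int : IntervalIntegrable (fun x => b x * u x) volume (-D) D :=
    hb_int.mul_continuousOn hu_cont.continuousOn
  have hbu2_int : IntervalIntegrable (fun x => b x * u x ^ 2) volume (-D) D :=
    hb_int.mul_continuousOn (hu_cont.pow 2).continuousOn
  set I := ∫ x in (-D)..D, deriv u x ^ 2 with hIdef
  set J := ∫ t in (-ε)..ε, deriv u t ^ 2 with hJdef
  have hIε : IntervalIntegrable (fun t => deriv u t ^ 2) volume (-ε) ε := by
    apply hI'.mono_set
    rw [Set.uIcc_of_le (by linarith : -ε ≤ ε), Set.uIcc_of_le hDD]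
    exact hεIcc
  have hJ0 : 0 ≤ J := intervalIntegral.integral_nonneg (by linarith) (fun t _ => sq_nonneg _)
  have hJI : J ≤ I := by
    apply intervalIntegral.integral_mono_interval (by linarith : -D ≤ -ε)
      (by linarith : -ε ≤ ε) (by linarith : ε ≤ D) _ hI'
    filter_upwards with t using sq_nonneg _
  set C := Real.sqrt (2 * ε * J) with hC
  have hC0 : 0 ≤ C := Real.sqrt_nonneg _
  have hC2 : C ^ 2 = 2 * ε * J := Real.sq_sqrt (by positivity)
  -- pointwise bound on |u x - u y| for x, y in (-ε, ε)
  have hdiff : ∀ p q : ℝ, p ∈ Icc (-ε) ε → q ∈ Icc (-ε) ε → |u p - u q| ≤ C := by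
    intro p q hp hq
    have h := diff_sq_le u hu (-ε) ε p q (by linarith) hp hq hIε
    have h2 : (u p - u q) ^ 2 ≤ C ^ 2 := by
      rw [hC2]; calc (u p - u q) ^ 2 ≤ (ε - -ε) * J := h
        _ = 2 * ε * J := by ring
    nlinarith [abs_nonneg (u p - u q), sq_abs (u p - u q)]
  -- key pointwise bound: u x ^ 2 ≤ 2 ε J on the support of b
  have hkey : ∀ x ∈ Icc (-D) D, b x ≠ 0 → u x ^ 2 ≤ 2 * ε * J := by
    intro x hxmem hbx
    have hxε : x ∈ Ioo (-ε) ε := hsupp x hxmem hbx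
    have hxε' : x ∈ Icc (-ε) ε := ⟨le_of_lt hxε.1, le_of_lt hxε.2⟩
    have hint1 : IntervalIntegrable (fun y => b y * (u x - u y)) volume (-D) D :=
      hb_int.mul_continuousOn ((continuous_const.sub hu_cont).continuousOn)
    have hVeq : (∫ y in (-D)..D, b y * (u x - u y)) = L * u x := by
      have : (fun y => b y * (u x - u y)) = fun y => b y * u x - b y * u y := by
        funext y; ring
      rw [this, intervalIntegral.integral_sub (hb_int.mul_const (u x)) hbu_int,
        intervalIntegral.integral_mul_const, hbu0, hmean]
      ring
    have hub : (∫ y in (-D)..D, b y * (u x - u y)) ≤ L * C := by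
      have : (∫ y in (-D)..D, b y * (u x - u y)) ≤ ∫ y in (-D)..D, b y * C := by
        apply intervalIntegral.integral_mono_on hDD hint1 (hb_int.mul_const C)
        intro y hy
        rcases eq_or_ne (b y) 0 with hby | hby
        · simp [hby]
        · have hyε : y ∈ Icc (-ε) ε := by
            have := hsupp y hy hby
            exact ⟨le_of_lt this.1, le_of_lt this.2⟩
          have habs := hdiff x y hxε' hyε
          have : u x - u y ≤ C := (le_abs_self _).trans habs
          exact mul_le_mul_of_nonneg_left this (hb_nonneg y)
      rwa [intervalIntegral.integral_mul_const, hmean] at this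
    have hlb : -(L * C) ≤ ∫ y in (-D)..D, b y * (u x - u y) := by
      have h2 : (∫ y in (-D)..D, (-(b y * C))) ≤ ∫ y in (-D)..D, b y * (u x - u y) := by
        apply intervalIntegral.integral_mono_on hDD ((hb_int.mul_const C).neg) hint1
        intro y hy
        show -(b y * C) ≤ b y * (u x - u y)
        rcases eq_or_ne (b y) 0 with hby | hby
        · simp [hby]
        · have hyε : y ∈ Icc (-ε) ε := by
            have := hsupp y hy hby
            exact ⟨le_of_lt this.1, le_of_lt this.2⟩
          have habs := hdiff x y hxε' hyε
          have h3 : -C ≤ u x - u y := neg_le_of_abs_le habs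
          nlinarith [hb_nonneg y]
      rw [intervalIntegral.integral_neg, intervalIntegral.integral_mul_const, hmean] at h2
      linarith
    rw [hVeq] at hub hlb
    have hLu : |L * u x| ≤ L * C := abs_le.mpr ⟨by linarith, hub⟩
    have := sq_abs (L * u x)
    have hsq : (L * u x) ^ 2 ≤ (L * C) ^ 2 := by
      nlinarith [abs_nonneg (L * u x)]
    have hL2 : 0 < L ^ 2 := by positivity
    have : L ^ 2 * u x ^ 2 ≤ L ^ 2 * (2 * ε * J) := by nlinarith [hC2]
    exact le_of_mul_le_mul_left (by linarith) hL2
  -- integrate the pointwise bound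
  have hfin : (∫ x in (-D)..D, b x * u x ^ 2) ≤ ∫ x in (-D)..D, b x * (2 * ε * J) := by
    apply intervalIntegral.integral_mono_on hDD hbu2_int (hb_int.mul_const _)
    intro x hx
    rcases eq_or_ne (b x) 0 with hbx | hbx
    · simp [hbx]
    · exact mul_le_mul_of_nonneg_left (hkey x hx hbx) (hb_nonneg x)
  rw [intervalIntegral.integral_mul_const, hmean] at hfin
  calc (∫ x in (-D)..D, b x * u x ^ 2) ≤ L * (2 * ε * J) := hfin
    _ ≤ 2 * ε * L * I := by
        have := mul_le_mul_of_nonneg_left hJI (by positivity : (0:ℝ) ≤ 2 * ε * L)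
        linarith
end

section
/- Suppose y : [s₀, T) → ℝ is differentiable, satisfies y'(s) ≥ −2δ y(s) + (2α/L) y(s)² with α, L > 0, δ ∈ ℝ, and y(s₀) > δL/α with y(s₀) > 0. Then y cannot be extended to a global solution on [s₀, ∞): there exists a finite time s₁ > s₀ such that y(s) → ∞ as s → s₁⁻. -/
open Set

/-!
Since `y'(s) ≥ y (c y - 2δ)` with `c = 2α/L` and `c y(s₀) > 2δ`, the derivative is positive
whenever `y` returns to its initial value, so `y ≥ y(s₀)` on `[s₀, ∞)`. There the right-hand side
dominates `k y²` for some `k > 0`, hence `1/y` decreases at rate at least `k` and would become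
nonpositive after time `1/(k y(s₀))`, which is impossible for a positive function.
-/

section DerivBounds

variable {y y' : ℝ → ℝ} {a : ℝ}

theorem le_of_hasDerivAt_pos_of_eq (hderiv : ∀ s ∈ Ici a, HasDerivAt y (y' s) s)
    (hpos : ∀ s ∈ Ici a, y s = y a → 0 < y' s) : ∀ s ∈ Ici a, y a ≤ y s := by
  intro s hs
  have hcont : ContinuousOn y (Icc a s) := fun x hx =>
    (hderiv x hx.1).continuousAt.continuousWithinAt
  exact image_le_of_deriv_right_lt_deriv_boundary' (f' := fun _ => 0) continuousOn_const
    (fun x _ => hasDerivWithinAt_const x _ (y a)) le_rfl hcont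
    (fun x hx => (hderiv x hx.1).hasDerivWithinAt) (fun x hx hx' => hpos x hx.1 hx'.symm)
    ⟨hs, le_rfl⟩

theorem inv_le_inv_sub_mul_of_mul_sq_le_deriv {k : ℝ}
    (hderiv : ∀ s ∈ Ici a, HasDerivAt y (y' s) s) (hy : ∀ s ∈ Ici a, 0 < y s)
    (hk : ∀ s ∈ Ici a, k * y s ^ 2 ≤ y' s) : ∀ s ∈ Ici a, (y s)⁻¹ ≤ (y a)⁻¹ - k * (s - a) := by
  intro s hs
  have hinv : ∀ x ∈ Ici a, HasDerivAt (fun u => (y u)⁻¹) (-y' x / y x ^ 2) x := fun x hx =>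
    (hderiv x hx).inv (hy x hx).ne'
  have hline : ∀ x, HasDerivAt (fun u => (y a)⁻¹ - k * (u - a)) (-k) x := fun x => by
    simpa using ((hasDerivAt_id x).sub_const a).const_mul k |>.const_sub (y a)⁻¹
  refine image_le_of_deriv_right_le_deriv_boundary
    (fun x hx => (hinv x hx.1).continuousAt.continuousWithinAt)
    (fun x hx => (hinv x hx.1).hasDerivWithinAt) (by simp)
    (fun x _ => (hline x).continuousAt.continuousWithinAt) (fun x _ => (hline x).hasDerivWithinAt)
    (fun x hx => ?_) ⟨hs, le_rfl⟩
  have hyx := hy x hx.1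
  rw [neg_div, neg_le_neg_iff, le_div_iff₀ (by positivity)]
  exact hk x hx.1

end DerivBounds

theorem min_mul_sq_le_neg_mul_add_mul_sq {c δ y₀ y : ℝ} (hy₀ : 0 < y₀) (hy : y₀ ≤ y) :
    min c ((c * y₀ - 2 * δ) / y₀) * y ^ 2 ≤ -2 * δ * y + c * y ^ 2 := by
  set k := min c ((c * y₀ - 2 * δ) / y₀)
  have hk₀ : k * y₀ ≤ c * y₀ - 2 * δ := by
    rw [← le_div_iff₀ hy₀]; exact min_le_right _ _
  have hkc : k ≤ c := min_le_left _ _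
  -- `k y = k y₀ + k (y - y₀) ≤ (c y₀ - 2δ) + c (y - y₀) = c y - 2δ`
  have hky : k * y ≤ c * y - 2 * δ := by nlinarith
  nlinarith

/-- Riccati-type backward blow-up: a differentiable function satisfying
`y' ≥ -2δ y + (2α/L) y²` with `y(s₀) > δL/α` and `y(s₀) > 0` cannot be a global
solution on `[s₀, ∞)`; moreover any maximal solution blows up at a finite time
`s₁ > s₀`, i.e. `y(s) → ∞` as `s → s₁⁻`.  We formalize "cannot be extended to a
global solution": no function can satisfy the differential inequality on all of
`[s₀, ∞)` together with the initial condition. -/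
theorem riccati_backward_blowup (α L δ s₀ : ℝ) (hα : 0 < α) (hL : 0 < L)
    (y y' : ℝ → ℝ)
    (hderiv : ∀ s ∈ Ici s₀, HasDerivAt y (y' s) s)
    (hineq : ∀ s ∈ Ici s₀, y' s ≥ -2 * δ * y s + (2 * α / L) * (y s) ^ 2)
    (hinit : y s₀ > δ * L / α) (hpos : y s₀ > 0) :
    False := by
  set c := 2 * α / L
  have hc : 0 < c := by positivity
  have hgap : 0 < c * y s₀ - 2 * δ := by
    have hδL : δ * L < y s₀ * α := (div_lt_iff₀ hα).mp hinit
    rw [div_mul_eq_mul_div, sub_pos, lt_div_iff₀ hL]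
    nlinarith
  have hge : ∀ s ∈ Ici s₀, y s₀ ≤ y s := le_of_hasDerivAt_pos_of_eq hderiv fun s hs hys => by
    have hs' := hineq s hs
    rw [hys] at hs'
    nlinarith
  set k := min c ((c * y s₀ - 2 * δ) / y s₀)
  have hk : 0 < k := lt_min hc (div_pos hgap hpos)
  have hinv := inv_le_inv_sub_mul_of_mul_sq_le_deriv hderiv
    (fun s hs => hpos.trans_le (hge s hs))
    (fun s hs => (min_mul_sq_le_neg_mul_add_mul_sq hpos (hge s hs)).trans (hineq s hs))
  set s := s₀ + (y s₀)⁻¹ / k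
  have hs : s ∈ Ici s₀ := mem_Ici.mpr (le_add_of_nonneg_right (by positivity))
  have hdecay : k * (s - s₀) = (y s₀)⁻¹ := by simp only [s, add_sub_cancel_left]; field_simp
  have hys : 0 < (y s)⁻¹ := inv_pos.mpr (hpos.trans_le (hge s hs))
  linarith [hinv s hs]
end

section
/- If x : (−∞, 0] → ℝ is differentiable, nonnegative, and satisfies x'(t) + λ x(t) ≤ (1/λ)‖f‖² for all t ≤ 0, where λ > 0, then x(t) ≥ e^{−λt} x(0) + (1/λ²)‖f‖² (1 − e^{−λt}) for all t ≤ 0. -/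
/-!
With the integrating factor `e^{λt}`, the inequality `x' + λ x ≤ b` says that
`e^{λt} (x t - b/λ)` is nonincreasing; comparing its values at `t ≤ 0` and at `0`
gives the lower bound.
-/

open Set Real

section IntegratingFactor

variable {s : Set ℝ} {lam b : ℝ} {x x' : ℝ → ℝ}

theorem hasDerivAt_exp_mul_mul_sub_div {t : ℝ} (hlam : lam ≠ 0) (hx : HasDerivAt x (x' t) t) :
    HasDerivAt (fun u => exp (lam * u) * (x u - b / lam))
      (exp (lam * t) * (x' t + lam * x t - b)) t := by
  have hexp : HasDerivAt (fun u => exp (lam * u)) (exp (lam * t) * lam) t :=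
    (hasDerivAt_const_mul lam).exp
  refine (hexp.mul (hx.sub_const (b / lam))).congr_deriv ?_
  field_simp
  ring

theorem antitoneOn_exp_mul_mul_sub_div (hs : Convex ℝ s) (hlam : lam ≠ 0)
    (hderiv : ∀ t ∈ s, HasDerivAt x (x' t) t) (hineq : ∀ t ∈ s, x' t + lam * x t ≤ b) :
    AntitoneOn (fun t => exp (lam * t) * (x t - b / lam)) s := by
  have hg := fun t ht => hasDerivAt_exp_mul_mul_sub_div (b := b) hlam (hderiv t ht)
  refine antitoneOn_of_deriv_nonpos hs
    (fun t ht => (hg t ht).continuousAt.continuousWithinAt)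
    (fun t ht => (hg t (interior_subset ht)).differentiableAt.differentiableWithinAt)
    (fun t ht => ?_)
  rw [(hg t (interior_subset ht)).deriv]
  exact mul_nonpos_of_nonneg_of_nonpos (exp_pos _).le
    (sub_nonpos.2 (hineq t (interior_subset ht)))

theorem exp_mul_add_div_mul_one_sub_exp_le (hs : Convex ℝ s) (hlam : lam ≠ 0)
    (hderiv : ∀ t ∈ s, HasDerivAt x (x' t) t) (hineq : ∀ t ∈ s, x' t + lam * x t ≤ b)
    {t u : ℝ} (ht : t ∈ s) (hu : u ∈ s) (htu : t ≤ u) :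
    exp (lam * (u - t)) * x u + b / lam * (1 - exp (lam * (u - t))) ≤ x t := by
  have hmono := antitoneOn_exp_mul_mul_sub_div hs hlam hderiv hineq ht hu htu
  have hscaled := mul_le_mul_of_nonneg_left hmono (exp_pos (-(lam * t))).le
  simp only [← mul_assoc, ← exp_add, neg_add_cancel, exp_zero, one_mul] at hscaled
  rw [show -(lam * t) + lam * u = lam * (u - t) by ring] at hscaled
  linarith

end IntegratingFactor

theorem backward_gronwall_lower_bound_general
    (lam F : ℝ) (hlam : 0 < lam)
    (x x' : ℝ → ℝ)
    (hderiv : ∀ t ≤ (0:ℝ), HasDerivAt x (x' t) t)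
    (hineq : ∀ t ≤ (0:ℝ), x' t + lam * x t ≤ (1 / lam) * F ^ 2) :
    ∀ t ≤ (0:ℝ),
      x t ≥ Real.exp (-lam * t) * x 0 +
        (1 / lam ^ 2) * F ^ 2 * (1 - Real.exp (-lam * t)) := by
  intro t ht
  have h := exp_mul_add_div_mul_one_sub_exp_le (convex_Iic 0) hlam.ne' hderiv hineq ht
    self_mem_Iic ht
  have hb : 1 / lam * F ^ 2 / lam = 1 / lam ^ 2 * F ^ 2 := by field_simp
  rwa [zero_sub, mul_neg, ← neg_mul, hb] at h

/-- Backward-in-time Gronwall inequality: if `x` is differentiable on `(-∞,0]`,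
nonnegative, and satisfies `x'(t) + λ x(t) ≤ (1/λ)‖f‖²` for all `t ≤ 0`, where
`λ > 0` and `‖f‖` is a fixed nonnegative constant, then
`x(t) ≥ e^{-λt} x(0) + (1/λ²)‖f‖² (1 - e^{-λt})` for all `t ≤ 0`. -/
theorem backward_gronwall_lower_bound
    (lam F : ℝ) (hlam : 0 < lam) (hF : 0 ≤ F)
    (x x' : ℝ → ℝ)
    (hderiv : ∀ t ≤ (0:ℝ), HasDerivAt x (x' t) t)
    (hnonneg : ∀ t ≤ (0:ℝ), 0 ≤ x t)
    (hineq : ∀ t ≤ (0:ℝ), x' t + lam * x t ≤ (1 / lam) * F ^ 2) :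
    ∀ t ≤ (0:ℝ),
      x t ≥ Real.exp (-lam * t) * x 0 +
        (1 / lam ^ 2) * F ^ 2 * (1 - Real.exp (-lam * t)) :=
  backward_gronwall_lower_bound_general lam F hlam x x' hderiv hineq
end

section
/- Let u be a smooth solution of the 2D hyperviscous Navier–Stokes equations u_t + ν A² u + B(u,u) = 0 with ν > 0 on the periodic torus, where A is the Stokes operator and B(u,v) = P[(u·∇)v]. Then for t ≥ t₀ > 0, e^{−b(t−t₀)} ‖u(t₀)‖ ≤ ‖u(t)‖ ≤ e^{−νλ₁²(t−t₀)} ‖u(t₀)‖, where λ₁ = (2π/L)² is the first eigenvalue of A and b = ν (‖Au(t₀)‖²/‖u(t₀)‖²) exp{c ν^{−3/2} λ₁^{−2} ‖u(t₀)‖²}. -/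
/-!
The upper bound follows from the energy identity `d/dt ‖u‖² = -2ν‖Au‖²` and `‖Au‖ ≥ λ₁‖u‖`.
For the lower bound, `φ = ‖Au‖² e^{K‖u‖²} / ‖u‖²` with `K = c²/(2ν²λ₁²)` is nonincreasing:
formally `d/dt ‖Au‖² = 2⟪u_t, A²u⟫`, and since `B(u,u) ⊥ u` only the part of `A²u` orthogonal
to `u` meets the nonlinearity, so Young's inequality and `‖B(u,u)‖ ≤ c λ₁⁻¹ ‖Au‖²` give
`(log φ)' ≤ -νK‖Au‖² < 0`. Hence `ν‖Au‖² ≤ νφ(t₀)‖u‖² = b‖u‖²` for `t ≥ t₀`, and the energy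
identity gives `‖u(t)‖ ≥ e^{-b(t-t₀)}‖u(t₀)‖`.
As `‖Au(t)‖²` need not be differentiable, monotonicity of `φ` comes from one-sided information:
just left of `t`, `φ` dominates (by convexity of `v ↦ ‖Av‖²`) a differentiable function with
negative derivative and the same value at `t`; just right of `t`, `φ` comes arbitrarily close
to `φ(t)` because `‖Au‖²` is the derivative of `-‖u‖²/(2ν)` (mean value theorem).
-/

open Set Real Topology Filter
open scoped InnerProductSpace

theorem antitone_of_frequently_nhdsGT_of_eventually_nhdsLT {φ : ℝ → ℝ}
    (hright : ∀ r c, φ r < c → ∃ᶠ x in 𝓝[>] r, φ x < c)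
    (hleft : ∀ r, ∀ᶠ s in 𝓝[<] r, φ r < φ s) : Antitone φ := by
  intro a t hat
  by_contra! hlt
  obtain ⟨c, hac, hct⟩ := exists_between hlt
  set S := {r | r ∈ Icc a t ∧ φ r < c}
  have haS : a ∈ S := ⟨left_mem_Icc.2 hat, hac⟩
  have hbdd : BddAbove S := ⟨t, fun x hx => hx.1.2⟩
  have haR : a ≤ sSup S := le_csSup hbdd haS
  have hφR : φ (sSup S) < c := by
    by_contra! hcR
    obtain ⟨θ, hθR, hθ⟩ := mem_nhdsLT_iff_exists_Ioo_subset.1 (hleft (sSup S))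
    obtain ⟨x, hxS, hθx⟩ := exists_lt_of_lt_csSup ⟨a, haS⟩ hθR
    rcases (le_csSup hbdd hxS).lt_or_eq with hxR | hxR
    · exact lt_asymm (hθ ⟨hθx, hxR⟩) (hxS.2.trans_le hcR)
    · exact (hxR ▸ hxS.2).not_ge hcR
  rcases (csSup_le ⟨a, haS⟩ fun x hx => hx.1.2 : sSup S ≤ t).lt_or_eq with hRt | hRt
  · obtain ⟨x, hxc, hRx, hxt⟩ :=
      ((hright _ c hφR).and_eventually (Ioo_mem_nhdsGT hRt)).exists
    exact (le_csSup hbdd ⟨⟨haR.trans hRx.le, hxt.le⟩, hxc⟩).not_gt hRx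
  · exact (hRt ▸ hφR).not_gt hct

theorem HasDerivAt.eventually_nhdsLT_lt_of_neg {g : ℝ → ℝ} {D r : ℝ} (hg : HasDerivAt g D r)
    (hD : D < 0) : ∀ᶠ s in 𝓝[<] r, g r < g s := by
  have hslope : ∀ᶠ s in 𝓝[<] r, slope g r s < 0 :=
    ((hasDerivAt_iff_tendsto_slope.1 hg).mono_left (nhdsLT_le_nhdsNE r)).eventually_lt_const hD
  filter_upwards [hslope, self_mem_nhdsWithin] with s hs hsr
  rwa [slope_comm, slope_neg_iff_of_le (le_of_lt hsr)] at hs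

theorem mapClusterPt_nhdsGT_of_hasDerivAt {E f : ℝ → ℝ} (hE : ∀ s, HasDerivAt E (f s) s)
    (r : ℝ) : MapClusterPt (f r) (𝓝[>] r) f := by
  refine mapClusterPt_iff_frequently.2 fun U hU => frequently_iff.2 fun {V} hV => ?_
  obtain ⟨b, hrb, hbV⟩ := mem_nhdsGT_iff_exists_Ioo_subset.1 hV
  have hslope : ∀ᶠ x in 𝓝[>] r, slope E r x ∈ U :=
    (hasDerivAt_iff_tendsto_slope.1 (hE r)).mono_left (nhdsGT_le_nhdsNE r) hU
  obtain ⟨x, hxU, hrx, hxb⟩ := (hslope.and (Ioo_mem_nhdsGT hrb)).exists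
  obtain ⟨ξ, ⟨hrξ, hξx⟩, hξ⟩ := exists_hasDerivAt_eq_slope E f hrx
    (fun y _ => (hE y).continuousAt.continuousWithinAt) fun y _ => hE y
  exact ⟨ξ, hbV ⟨hrξ, hξx.trans hxb⟩, by rwa [hξ, ← slope_def_field]⟩

theorem MapClusterPt.mul_tendsto {α M : Type*} [TopologicalSpace M] [Mul M] [ContinuousMul M]
    {F : Filter α} {f g : α → M} {a b : M} (hf : MapClusterPt a F f) (hg : Tendsto g F (𝓝 b)) :
    MapClusterPt (a * b) F fun x => f x * g x := by
  obtain ⟨U, hUF, hfU⟩ := mapClusterPt_iff_ultrafilter.1 hf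
  exact mapClusterPt_iff_ultrafilter.2 ⟨U, hUF, hfU.mul (hg.mono_left hUF)⟩

theorem HasDerivAt.exp_mul_div_self {E : ℝ → ℝ} {E' K r : ℝ} (hE : HasDerivAt E E' r)
    (hr : E r ≠ 0) :
    HasDerivAt (fun s => Real.exp (K * E s) / E s)
      (Real.exp (K * E r) / E r * ((K - (E r)⁻¹) * E')) r :=
  ((hE.const_mul K).exp.fun_div hE hr).congr_deriv (by field_simp)

theorem le_mul_exp_of_hasDerivAt_le {f f' : ℝ → ℝ} {K a b : ℝ}
    (hf : ∀ x, HasDerivAt f (f' x) x) (bound : ∀ x ∈ Ico a b, f' x ≤ K * f x) (hab : a ≤ b) :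
    f b ≤ f a * exp (K * (b - a)) := by
  have := le_gronwallBound_of_liminf_deriv_right_le (f' := f') (ε := 0)
    (fun x _ => (hf x).continuousAt.continuousWithinAt)
    (fun x _ r hr => (hf x).hasDerivWithinAt.liminf_right_slope_le hr) le_rfl
    (by simpa using bound) b ⟨hab, le_rfl⟩
  rwa [gronwallBound_ε0] at this

theorem exp_neg_mul_mul_sq (k x y : ℝ) :
    (exp (-k * x) * y) ^ 2 = y ^ 2 * exp (-(2 * k) * x) := by
  rw [mul_pow, ← exp_nat_mul]
  ring_nf

section NormSq

variable {F : Type*} [NormedAddCommGroup F] {u : ℝ → F} {E' : ℝ → ℝ} {k a b : ℝ}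

theorem norm_le_exp_neg_mul_of_hasDerivAt_norm_sq
    (hE : ∀ s, HasDerivAt (fun s => ‖u s‖ ^ 2) (E' s) s)
    (bound : ∀ s ∈ Ico a b, E' s ≤ -(2 * k) * ‖u s‖ ^ 2) (hab : a ≤ b) :
    ‖u b‖ ≤ exp (-k * (b - a)) * ‖u a‖ := by
  refine (pow_le_pow_iff_left₀ (norm_nonneg _) (by positivity) two_ne_zero).1 ?_
  rw [exp_neg_mul_mul_sq]
  exact le_mul_exp_of_hasDerivAt_le hE bound hab

theorem exp_neg_mul_le_norm_of_hasDerivAt_norm_sq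
    (hE : ∀ s, HasDerivAt (fun s => ‖u s‖ ^ 2) (E' s) s)
    (bound : ∀ s ∈ Ico a b, -(2 * k) * ‖u s‖ ^ 2 ≤ E' s) (hab : a ≤ b) :
    exp (-k * (b - a)) * ‖u a‖ ≤ ‖u b‖ := by
  refine (pow_le_pow_iff_left₀ (by positivity) (norm_nonneg _) two_ne_zero).1 ?_
  rw [exp_neg_mul_mul_sq]
  have := le_mul_exp_of_hasDerivAt_le (f := fun s => -‖u s‖ ^ 2) (fun s => (hE s).neg)
    (K := -(2 * k)) (fun s hs => by linarith [bound s hs]) hab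
  linarith

end NormSq

theorem mul_rpow_le_div_mul_sq {c l x y : ℝ} (hl : 0 < l) (hc : 0 ≤ c) (hx : 0 ≤ x)
    (hxy : l * x ≤ y) :
    c * l ^ (-(1:ℝ)/2) * x ^ ((1:ℝ)/2) * y ^ ((3:ℝ)/2) ≤ c / l * y ^ 2 := by
  have hy : 0 ≤ y := (mul_nonneg hl.le hx).trans hxy
  have hx_le : x ^ ((1:ℝ)/2) ≤ l ^ (-(1:ℝ)/2) * y ^ ((1:ℝ)/2) := by
    rw [neg_div, rpow_neg hl.le, ← div_eq_inv_mul, ← div_rpow hy hl.le]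
    exact rpow_le_rpow hx ((le_div_iff₀' hl).2 hxy) (by norm_num)
  calc c * l ^ (-(1:ℝ)/2) * x ^ ((1:ℝ)/2) * y ^ ((3:ℝ)/2)
      ≤ c * l ^ (-(1:ℝ)/2) * (l ^ (-(1:ℝ)/2) * y ^ ((1:ℝ)/2)) * y ^ ((3:ℝ)/2) := by gcongr
    _ = c * (l ^ (-(1:ℝ)/2) * l ^ (-(1:ℝ)/2)) * (y ^ ((1:ℝ)/2) * y ^ ((3:ℝ)/2)) := by ring
    _ = c / l * y ^ 2 := by
      rw [← rpow_add hl, ← rpow_add' hy (by norm_num)]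
      norm_num [rpow_neg_one, div_eq_mul_inv]

section Hyperviscous

variable {H : Type*} [NormedAddCommGroup H] [InnerProductSpace ℝ H] {A : H →ₗ[ℝ] H}
  {B : H → H → H} {ν : ℝ}

theorem LinearMap.IsSymmetric.inner_self_apply_apply (hA : A.IsSymmetric) (v : H) :
    ⟪v, A (A v)⟫_ℝ = ‖A v‖ ^ 2 := by
  rw [← hA, real_inner_self_eq_norm_sq]

theorem LinearMap.IsSymmetric.norm_sq_add_two_inner_le (hA : A.IsSymmetric) (v w : H) :
    ‖A v‖ ^ 2 + 2 * ⟪A (A v), w - v⟫_ℝ ≤ ‖A w‖ ^ 2 := by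
  rw [hA, map_sub, inner_sub_right, real_inner_self_eq_norm_sq]
  nlinarith [norm_sub_sq_real (A w) (A v), sq_nonneg ‖A w - A v‖, real_inner_comm (A v) (A w)]

theorem LinearMap.IsSymmetric.eventually_nhdsLT_norm_sq_mul_lt (hA : A.IsSymmetric)
    {u : ℝ → H} {u' : H} {ρ : ℝ → ℝ} {ρ' r : ℝ} (hu : HasDerivAt u u' r)
    (hρ : HasDerivAt ρ ρ' r) (hρ_nonneg : ∀ s, 0 ≤ ρ s)
    (hneg : 2 * ⟪u', A (A (u r))⟫_ℝ * ρ r + ‖A (u r)‖ ^ 2 * ρ' < 0) :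
    ∀ᶠ s in 𝓝[<] r, ‖A (u r)‖ ^ 2 * ρ r < ‖A (u s)‖ ^ 2 * ρ s := by
  have hm : HasDerivAt (fun s => ‖A (u r)‖ ^ 2 + 2 * ⟪A (A (u r)), u s - u r⟫_ℝ)
      (2 * ⟪A (A (u r)), u'⟫_ℝ) r := by
    simpa using (((hasDerivAt_const r (A (A (u r)))).inner ℝ (hu.sub_const (u r))).const_mul
      2).const_add (‖A (u r)‖ ^ 2)
  -- by convexity, `‖A (u s)‖²` lies above this tangent function
  have hmρ := (hm.mul hρ).eventually_nhdsLT_lt_of_neg (by simpa [real_inner_comm] using hneg)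
  filter_upwards [hmρ] with s hs
  calc ‖A (u r)‖ ^ 2 * ρ r = (‖A (u r)‖ ^ 2 + 2 * ⟪A (A (u r)), u r - u r⟫_ℝ) * ρ r := by simp
    _ < (‖A (u r)‖ ^ 2 + 2 * ⟪A (A (u r)), u s - u r⟫_ℝ) * ρ s := hs
    _ ≤ ‖A (u s)‖ ^ 2 * ρ s :=
      mul_le_mul_of_nonneg_right (hA.norm_sq_add_two_inner_le _ _) (hρ_nonneg s)

theorem hasDerivAt_norm_sq_of_hyperviscous (hA : A.IsSymmetric)
    (hB_orth : ∀ v, ⟪B v v, v⟫_ℝ = 0) {u : ℝ → H} {t : ℝ}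
    (hu : HasDerivAt u (-(ν • A (A (u t)) + B (u t) (u t))) t) :
    HasDerivAt (fun s => ‖u s‖ ^ 2) (-(2 * ν) * ‖A (u t)‖ ^ 2) t := by
  convert hu.norm_sq using 1
  rw [inner_neg_right, inner_add_right, real_inner_smul_right, hA.inner_self_apply_apply,
    real_inner_comm, hB_orth]
  ring

theorem two_inner_hyperviscous_le (hA : A.IsSymmetric) (hB_orth : ∀ v, ⟪B v v, v⟫_ℝ = 0)
    (hν : 0 < ν) {v : H} (hv : v ≠ 0) :
    2 * ⟪-(ν • A (A v) + B v v), A (A v)⟫_ℝ ≤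
      -(2 * ν) * ‖A v‖ ^ 4 / ‖v‖ ^ 2 + ‖B v v‖ ^ 2 / (2 * ν) := by
  -- `B v v` only sees the component of `A² v` orthogonal to `v`
  set W := A (A v) - (‖A v‖ ^ 2 / ‖v‖ ^ 2) • v
  have hBW : ⟪B v v, A (A v)⟫_ℝ = ⟪B v v, W⟫_ℝ := by
    rw [inner_sub_right, real_inner_smul_right, hB_orth, mul_zero, sub_zero]
  have hW : ‖W‖ ^ 2 = ‖A (A v)‖ ^ 2 - ‖A v‖ ^ 4 / ‖v‖ ^ 2 := by
    rw [norm_sub_sq_real, real_inner_smul_right, real_inner_comm, hA.inner_self_apply_apply,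
      norm_smul, mul_pow, Real.norm_of_nonneg (by positivity)]
    field_simp
    ring
  have hCS := real_inner_le_norm (-B v v) W
  rw [inner_neg_left, norm_neg] at hCS
  rw [inner_neg_left, inner_add_left, real_inner_smul_left, real_inner_self_eq_norm_sq, hBW]
  have hAM : 2 * (‖B v v‖ * ‖W‖) ≤ 2 * ν * ‖W‖ ^ 2 + ‖B v v‖ ^ 2 / (2 * ν) := by
    rw [← sub_nonneg]
    have : 2 * ν * ‖W‖ ^ 2 + ‖B v v‖ ^ 2 / (2 * ν) - 2 * (‖B v v‖ * ‖W‖) =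
      (2 * ν * ‖W‖ - ‖B v v‖) ^ 2 / (2 * ν) := by field_simp; ring
    rw [this]; positivity
  have : -(2 * ν) * ‖A v‖ ^ 4 / ‖v‖ ^ 2 = -(2 * ν) * (‖A (A v)‖ ^ 2 - ‖W‖ ^ 2) := by
    rw [hW]; ring
  rw [this]
  linarith

theorem two_inner_hyperviscous_add_lt_zero (hA : A.IsSymmetric)
    (hB_orth : ∀ v, ⟪B v v, v⟫_ℝ = 0) (hν : 0 < ν) {κ K : ℝ}
    (hB : ∀ v, ‖B v v‖ ≤ κ * ‖A v‖ ^ 2) (hK : κ ^ 2 < 4 * ν ^ 2 * K) {v : H} (hv : A v ≠ 0) :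
    2 * ⟪-(ν • A (A v) + B v v), A (A v)⟫_ℝ +
      ‖A v‖ ^ 2 * ((K - (‖v‖ ^ 2)⁻¹) * (-(2 * ν) * ‖A v‖ ^ 2)) < 0 := by
  have hv0 : v ≠ 0 := fun h => hv (by rw [h, map_zero])
  have hB2 : ‖B v v‖ ^ 2 ≤ κ ^ 2 * ‖A v‖ ^ 4 := by
    simpa [mul_pow, ← pow_mul] using pow_le_pow_left₀ (norm_nonneg _) (hB v) 2
  have hAv : 0 < ‖A v‖ ^ 4 := by positivity
  have hgap : κ ^ 2 * ‖A v‖ ^ 4 / (2 * ν) < 2 * ν * K * ‖A v‖ ^ 4 := by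
    rw [div_lt_iff₀ (by positivity)]
    nlinarith
  have hB4 : ‖B v v‖ ^ 2 / (2 * ν) ≤ κ ^ 2 * ‖A v‖ ^ 4 / (2 * ν) := by gcongr
  have hexpand : ‖A v‖ ^ 2 * ((K - (‖v‖ ^ 2)⁻¹) * (-(2 * ν) * ‖A v‖ ^ 2)) =
      -(2 * ν * K * ‖A v‖ ^ 4) - -(2 * ν) * ‖A v‖ ^ 4 / ‖v‖ ^ 2 := by ring
  rw [hexpand]
  linarith [two_inner_hyperviscous_le hA hB_orth hν hv0]

theorem antitone_hyperviscous_lyapunov (hA : A.IsSymmetric) (hB_orth : ∀ v, ⟪B v v, v⟫_ℝ = 0)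
    (hν : 0 < ν) {κ K : ℝ} (hB : ∀ v, ‖B v v‖ ≤ κ * ‖A v‖ ^ 2) (hK : κ ^ 2 < 4 * ν ^ 2 * K)
    {u : ℝ → H} (hu : ∀ t, HasDerivAt u (-(ν • A (A (u t)) + B (u t) (u t))) t)
    (hAu : ∀ t, A (u t) ≠ 0) :
    Antitone fun s => ‖A (u s)‖ ^ 2 * (Real.exp (K * ‖u s‖ ^ 2) / ‖u s‖ ^ 2) := by
  have hu0 : ∀ t, 0 < ‖u t‖ ^ 2 := fun t => by
    have : u t ≠ 0 := fun h => hAu t (by rw [h, map_zero])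
    positivity
  have hE := fun t => hasDerivAt_norm_sq_of_hyperviscous hA hB_orth (hu t)
  have hρ := fun t => (hE t).exp_mul_div_self (K := K) (hu0 t).ne'
  refine antitone_of_frequently_nhdsGT_of_eventually_nhdsLT (fun r c hc => ?_) fun r => ?_
  · have hf : ∀ s, HasDerivAt (fun s => -‖u s‖ ^ 2 / (2 * ν)) (‖A (u s)‖ ^ 2) s := fun s =>
      ((hE s).neg.div_const (2 * ν)).congr_deriv (by field_simp)
    exact ((mapClusterPt_nhdsGT_of_hasDerivAt hf r).mul_tendsto
      ((hρ r).continuousAt.tendsto.mono_left nhdsWithin_le_nhds)).frequently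
      (eventually_lt_nhds hc)
  · refine hA.eventually_nhdsLT_norm_sq_mul_lt (hu r) (hρ r) (fun s => by positivity) ?_
    have hρr : 0 < Real.exp (K * ‖u r‖ ^ 2) / ‖u r‖ ^ 2 := div_pos (exp_pos _) (hu0 r)
    linarith [mul_neg_of_pos_of_neg hρr
      (two_inner_hyperviscous_add_lt_zero hA hB_orth hν hB hK (hAu r))]

theorem norm_apply_sq_le_of_hyperviscous (hA : A.IsSymmetric) (hB_orth : ∀ v, ⟪B v v, v⟫_ℝ = 0)
    (hν : 0 < ν) {κ K : ℝ} (hB : ∀ v, ‖B v v‖ ≤ κ * ‖A v‖ ^ 2) (hK : κ ^ 2 < 4 * ν ^ 2 * K)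
    {u : ℝ → H} (hu : ∀ t, HasDerivAt u (-(ν • A (A (u t)) + B (u t) (u t))) t)
    (hAu : ∀ t, A (u t) ≠ 0) {t₀ s : ℝ} (hs : t₀ ≤ s) :
    ‖A (u s)‖ ^ 2 ≤ ‖A (u t₀)‖ ^ 2 / ‖u t₀‖ ^ 2 * Real.exp (K * ‖u t₀‖ ^ 2) * ‖u s‖ ^ 2 := by
  have hK0 : 0 < K := pos_of_mul_pos_right ((sq_nonneg κ).trans_lt hK) (by positivity)
  have hus : 0 < ‖u s‖ := norm_pos_iff.2 fun h => hAu s (by rw [h, map_zero])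
  calc ‖A (u s)‖ ^ 2 ≤ ‖A (u s)‖ ^ 2 * Real.exp (K * ‖u s‖ ^ 2) :=
        le_mul_of_one_le_right (sq_nonneg _) (one_le_exp (by positivity))
    _ = ‖A (u s)‖ ^ 2 * (Real.exp (K * ‖u s‖ ^ 2) / ‖u s‖ ^ 2) * ‖u s‖ ^ 2 := by field_simp
    _ ≤ ‖A (u t₀)‖ ^ 2 * (Real.exp (K * ‖u t₀‖ ^ 2) / ‖u t₀‖ ^ 2) * ‖u s‖ ^ 2 :=
        mul_le_mul_of_nonneg_right
          (antitone_hyperviscous_lyapunov hA hB_orth hν hB hK hu hAu hs) (sq_nonneg _)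
    _ = _ := by ring

end Hyperviscous

/-- Two-sided exponential decay for the 2D periodic hyperviscous Navier-Stokes
equations `u_t + νA²u + B(u,u) = 0` (Theorem 3.3), formulated in the abstract
functional setting: `A` is the (symmetric) Stokes operator with first eigenvalue
`λ₁ = (2π/L)²`, `B` satisfies the orthogonality `(B(v,w),w) = 0` and the
Ladyzhenskaya-type estimate `‖B(v,v)‖ ≤ c λ₁^{-1/2} ‖v‖^{1/2} ‖Av‖^{3/2}`.
Then for `t ≥ t₀ > 0`,
`e^{-b(t-t₀)}‖u(t₀)‖ ≤ ‖u(t)‖ ≤ e^{-νλ₁²(t-t₀)}‖u(t₀)‖`, where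
`b = ν (‖Au(t₀)‖²/‖u(t₀)‖²) exp{c' ν^{-3/2} λ₁^{-2} ‖u(t₀)‖²}` for a
dimensionless constant `c'`. -/
theorem hyperviscous_NSE_two_sided_decay
    {H : Type*} [NormedAddCommGroup H] [InnerProductSpace ℝ H]
    (ν L c : ℝ) (hν : 0 < ν) (hL : 0 < L) (hc : 0 < c)
    (A : H →ₗ[ℝ] H) (B : H → H → H) (u : ℝ → H)
    (hA_symm : ∀ v w : H, inner (𝕜 := ℝ) (A v) w = inner (𝕜 := ℝ) v (A w))
    (hPoincare : ∀ v : H, (2 * π / L) ^ 2 * ‖v‖ ≤ ‖A v‖)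
    (hB_orth : ∀ v w : H, inner (𝕜 := ℝ) (B v w) w = (0:ℝ))
    (hB_est : ∀ v : H, ‖B v v‖ ≤
      c * ((2 * π / L) ^ 2) ^ (-(1:ℝ)/2) * ‖v‖ ^ ((1:ℝ)/2) * ‖A v‖ ^ ((3:ℝ)/2))
    (hu : ∀ t : ℝ, HasDerivAt u (-(ν • A (A (u t)) + B (u t) (u t))) t)
    (hnz : ∀ t : ℝ, u t ≠ 0) :
    ∃ c' : ℝ, 0 < c' ∧
      ∀ t₀ t : ℝ, 0 < t₀ → t₀ ≤ t →
        Real.exp (-(ν * (‖A (u t₀)‖ ^ 2 / ‖u t₀‖ ^ 2) *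
            Real.exp (c' * ν ^ (-(3:ℝ)/2) * (((2 * π / L) ^ 2) ^ 2)⁻¹ *
              ‖u t₀‖ ^ 2)) * (t - t₀)) * ‖u t₀‖ ≤ ‖u t‖ ∧
        ‖u t‖ ≤ Real.exp (-(ν * ((2 * π / L) ^ 2) ^ 2) * (t - t₀)) * ‖u t₀‖ := by
  set lam := (2 * π / L) ^ 2
  have hlam : 0 < lam := by positivity
  have hAu : ∀ t, A (u t) ≠ 0 := fun t =>
    norm_pos_iff.1 ((mul_pos hlam (norm_pos_iff.2 (hnz t))).trans_le (hPoincare _))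
  have hB_orth' : ∀ v, ⟪B v v, v⟫_ℝ = 0 := fun v => hB_orth v v
  have hB : ∀ v, ‖B v v‖ ≤ c / lam * ‖A v‖ ^ 2 := fun v =>
    (hB_est v).trans (mul_rpow_le_div_mul_sq hlam hc.le (norm_nonneg v) (hPoincare v))
  have hE := fun t => hasDerivAt_norm_sq_of_hyperviscous hA_symm hB_orth' (hu t)
  refine ⟨c ^ 2 / 2 * ν ^ (-(1:ℝ)/2), by positivity, fun t₀ t _ ht => ⟨?_, ?_⟩⟩
  · have hK_eq : c ^ 2 / 2 * ν ^ (-(1:ℝ)/2) * ν ^ (-(3:ℝ)/2) * (lam ^ 2)⁻¹ =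
        (c / lam) ^ 2 / (2 * ν ^ 2) := by
      rw [mul_assoc (c ^ 2 / 2), ← rpow_add hν]
      norm_num [rpow_neg hν.le]
      field_simp
    have hK : (c / lam) ^ 2 < 4 * ν ^ 2 * ((c / lam) ^ 2 / (2 * ν ^ 2)) := by
      field_simp
      nlinarith [show 0 < (c / lam) ^ 2 by positivity]
    rw [hK_eq]
    refine exp_neg_mul_le_norm_of_hasDerivAt_norm_sq hE (fun s hs => ?_) ht
    have := norm_apply_sq_le_of_hyperviscous hA_symm hB_orth' hν hB hK hu hAu hs.1
    linarith [mul_le_mul_of_nonneg_left this hν.le]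
  · refine norm_le_exp_neg_mul_of_hasDerivAt_norm_sq hE (fun s _ => ?_) ht
    have hP : lam ^ 2 * ‖u s‖ ^ 2 ≤ ‖A (u s)‖ ^ 2 := by
      simpa [mul_pow] using pow_le_pow_left₀ (by positivity) (hPoincare (u s)) 2
    linarith [mul_le_mul_of_nonneg_left hP hν.le]
end

section
/- Let q(t) = ‖Au(t)‖²/‖u(t)‖² for a nonzero solution u of u_t + νA²u + B(u,u) = 0. Then q satisfies q'(t) ≤ (1/(ν‖u‖²))‖B(u,u)‖², and consequently, using ‖B(u,u)‖ ≤ c‖u‖^{1/2}‖∇u‖‖Au‖^{1/2} and the Poincaré inequality, q'(t) ≤ c ν^{−1} λ₁^{−1/2} ‖u‖ ‖u‖_{H¹} q(t). -/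
open Set Real

set_option maxHeartbeats 1000000 in
/-- Evolution inequality for the energy-enstrophy ratio
`q(t) = ‖Au(t)‖²/‖u(t)‖²` along a nonzero solution of the hyperviscous
Navier-Stokes equations `u_t + νA²u + B(u,u) = 0`, in the abstract functional
setting:  `q'(t) ≤ (1/(ν‖u‖²))‖B(u,u)‖²`, and consequently, using the
Ladyzhenskaya-type bound `‖B(v,v)‖ ≤ c‖v‖^{1/2} ‖v‖_{H¹} ‖Av‖^{1/2}` and the
Poincaré inequality `‖v‖_{H¹} ≤ λ₁^{-1/2}‖Av‖`,
`q'(t) ≤ c² ν⁻¹ λ₁^{-1/2} ‖u‖ ‖u‖_{H¹} q(t)`. -/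
theorem enstrophy_energy_ratio_inequality
    {H : Type*} [NormedAddCommGroup H] [InnerProductSpace ℝ H]
    (ν lam₁ c : ℝ) (hν : 0 < ν) (hlam : 0 < lam₁) (hc : 0 < c)
    (A : H →ₗ[ℝ] H) (B : H → H → H) (H1 : H → ℝ) (u : ℝ → H)
    (hA_symm : ∀ v w : H, inner (𝕜 := ℝ) (A v) w = inner (𝕜 := ℝ) v (A w))
    (hPoincare : ∀ v : H, lam₁ * ‖v‖ ≤ ‖A v‖)
    (hH1_nonneg : ∀ v : H, 0 ≤ H1 v)
    (hH1_Poincare : ∀ v : H, H1 v ≤ lam₁ ^ (-(1:ℝ)/2) * ‖A v‖)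
    (hB_orth : ∀ v w : H, inner (𝕜 := ℝ) (B v w) w = (0:ℝ))
    (hLadyzhenskaya : ∀ v : H,
      ‖B v v‖ ≤ c * ‖v‖ ^ ((1:ℝ)/2) * H1 v * ‖A v‖ ^ ((1:ℝ)/2))
    (hu : ∀ t : ℝ, HasDerivAt u (-(ν • A (A (u t)) + B (u t) (u t))) t)
    (hnz : ∀ t : ℝ, u t ≠ 0) :
    ∀ t : ℝ,
      deriv (fun s => ‖A (u s)‖ ^ 2 / ‖u s‖ ^ 2) t ≤
        (1 / (ν * ‖u t‖ ^ 2)) * ‖B (u t) (u t)‖ ^ 2 ∧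
      deriv (fun s => ‖A (u s)‖ ^ 2 / ‖u s‖ ^ 2) t ≤
        c ^ 2 * ν⁻¹ * lam₁ ^ (-(1:ℝ)/2) * ‖u t‖ * H1 (u t) *
          (‖A (u t)‖ ^ 2 / ‖u t‖ ^ 2) := by
  intro t
  have hL : (0:ℝ) ≤ lam₁ ^ (-(1:ℝ)/2) := Real.rpow_nonneg hlam.le _
  have hg0 : (0:ℝ) < ‖u t‖ ^ 2 := pow_pos (norm_pos_iff.mpr (hnz t)) 2
  have ha : (0:ℝ) ≤ ‖A (u t)‖ ^ 2 := sq_nonneg _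
  have hRHS1 : (0:ℝ) ≤ (1 / (ν * ‖u t‖ ^ 2)) * ‖B (u t) (u t)‖ ^ 2 := by positivity
  -- step: RHS1 bound implies RHS2 bound
  have hstep : (1 / (ν * ‖u t‖ ^ 2)) * ‖B (u t) (u t)‖ ^ 2 ≤
      c ^ 2 * ν⁻¹ * lam₁ ^ (-(1:ℝ)/2) * ‖u t‖ * H1 (u t) *
        (‖A (u t)‖ ^ 2 / ‖u t‖ ^ 2) := by
    have hx : (‖u t‖ ^ ((1:ℝ)/2)) ^ 2 = ‖u t‖ := by
      rw [← Real.rpow_natCast (‖u t‖ ^ ((1:ℝ)/2)) 2, ← Real.rpow_mul (norm_nonneg _)]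
      norm_num
    have hy : (‖A (u t)‖ ^ ((1:ℝ)/2)) ^ 2 = ‖A (u t)‖ := by
      rw [← Real.rpow_natCast (‖A (u t)‖ ^ ((1:ℝ)/2)) 2, ← Real.rpow_mul (norm_nonneg _)]
      norm_num
    have hb1 : ‖B (u t) (u t)‖ ^ 2 ≤
        c ^ 2 * ‖u t‖ * (H1 (u t)) ^ 2 * ‖A (u t)‖ := by
      have h := hLadyzhenskaya (u t)
      have hsq := mul_self_le_mul_self (norm_nonneg (B (u t) (u t))) h
      have heq : (c * ‖u t‖ ^ ((1:ℝ)/2) * H1 (u t) * ‖A (u t)‖ ^ ((1:ℝ)/2)) *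
          (c * ‖u t‖ ^ ((1:ℝ)/2) * H1 (u t) * ‖A (u t)‖ ^ ((1:ℝ)/2)) =
          c ^ 2 * ‖u t‖ * (H1 (u t)) ^ 2 * ‖A (u t)‖ := by
        have hr : (c * ‖u t‖ ^ ((1:ℝ)/2) * H1 (u t) * ‖A (u t)‖ ^ ((1:ℝ)/2)) *
            (c * ‖u t‖ ^ ((1:ℝ)/2) * H1 (u t) * ‖A (u t)‖ ^ ((1:ℝ)/2)) =
            c ^ 2 * (‖u t‖ ^ ((1:ℝ)/2)) ^ 2 * (H1 (u t)) ^ 2 *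
              (‖A (u t)‖ ^ ((1:ℝ)/2)) ^ 2 := by ring
        rw [hr, hx, hy]
      rw [pow_two]
      exact hsq.trans_eq heq
    have hb2 : (H1 (u t)) ^ 2 ≤ H1 (u t) * (lam₁ ^ (-(1:ℝ)/2) * ‖A (u t)‖) := by
      have := hH1_Poincare (u t)
      nlinarith [hH1_nonneg (u t)]
    have hb2' := mul_le_mul_of_nonneg_left hb2
      (mul_nonneg (mul_nonneg (sq_nonneg c) (norm_nonneg (u t))) (norm_nonneg (A (u t))))
    have hb3 : ‖B (u t) (u t)‖ ^ 2 ≤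
        c ^ 2 * lam₁ ^ (-(1:ℝ)/2) * ‖u t‖ * H1 (u t) * ‖A (u t)‖ ^ 2 := by
      nlinarith [hb1, hb2']
    have heq2 : c ^ 2 * ν⁻¹ * lam₁ ^ (-(1:ℝ)/2) * ‖u t‖ * H1 (u t) *
        (‖A (u t)‖ ^ 2 / ‖u t‖ ^ 2) =
        (1 / (ν * ‖u t‖ ^ 2)) *
          (c ^ 2 * lam₁ ^ (-(1:ℝ)/2) * ‖u t‖ * H1 (u t) * ‖A (u t)‖ ^ 2) := by
      field_simp
      try ring
    rw [heq2]
    exact mul_le_mul_of_nonneg_left hb3 (by positivity)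
  have hmain : deriv (fun s => ‖A (u s)‖ ^ 2 / ‖u s‖ ^ 2) t ≤
      (1 / (ν * ‖u t‖ ^ 2)) * ‖B (u t) (u t)‖ ^ 2 := by
    by_cases hdiff : DifferentiableAt ℝ (fun s => ‖A (u s)‖ ^ 2 / ‖u s‖ ^ 2) t
    · set U := u t with hU
      set b := B U U with hb
      set u' : H := -(ν • A (A U) + b) with hu'def
      have hu' : HasDerivAt u u' t := hu t
      have hg : HasDerivAt (fun s => ‖u s‖ ^ 2)
          ((inner (𝕜 := ℝ) U u' + inner (𝕜 := ℝ) u' U : ℝ)) t := by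
        have h := HasDerivAt.inner ℝ hu' hu'
        have he : (fun s => ‖u s‖ ^ 2) = fun s => (inner (𝕜 := ℝ) (u s) (u s) : ℝ) := by
          funext s; rw [real_inner_self_eq_norm_sq]
        rw [he]
        exact h
      have hgdiff : DifferentiableAt ℝ (fun s => ‖u s‖ ^ 2) t := hg.differentiableAt
      have hfg : (fun s => ‖A (u s)‖ ^ 2) =
          fun s => (‖A (u s)‖ ^ 2 / ‖u s‖ ^ 2) * ‖u s‖ ^ 2 := by
        funext s
        rw [div_mul_cancel₀]
        exact (pow_pos (norm_pos_iff.mpr (hnz s)) 2).ne'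
      have hfdiff : DifferentiableAt ℝ (fun s => ‖A (u s)‖ ^ 2) t := by
        rw [hfg]; exact hdiff.mul hgdiff
      have hφ : HasDerivAt (fun s => (2 : ℝ) * inner (𝕜 := ℝ) (u s) (A (A U)))
          (2 * inner (𝕜 := ℝ) u' (A (A U))) t := by
        have h := (HasDerivAt.inner ℝ hu' (hasDerivAt_const t (A (A U)))).const_mul (2:ℝ)
        simpa using h
      have hmin : ∀ s : ℝ, ‖A U‖ ^ 2 - (2 : ℝ) * inner (𝕜 := ℝ) U (A (A U)) ≤
          ‖A (u s)‖ ^ 2 - (2 : ℝ) * inner (𝕜 := ℝ) (u s) (A (A U)) := by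
        intro s
        have h1 : inner (𝕜 := ℝ) (u s) (A (A U)) = inner (𝕜 := ℝ) (A (u s)) (A U) :=
          (hA_symm (u s) (A U)).symm
        have h2 : inner (𝕜 := ℝ) U (A (A U)) = inner (𝕜 := ℝ) (A U) (A U) :=
          (hA_symm U (A U)).symm
        have h3 := norm_sub_sq_real (A (u s)) (A U)
        have h4 := real_inner_self_eq_norm_sq (A U)
        nlinarith [sq_nonneg ‖A (u s) - A U‖]
      have hmin' : IsLocalMin
          (fun s => ‖A (u s)‖ ^ 2 - (2 : ℝ) * inner (𝕜 := ℝ) (u s) (A (A U))) t :=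
        Filter.Eventually.of_forall hmin
      have hψdiff : DifferentiableAt ℝ
          (fun s => ‖A (u s)‖ ^ 2 - (2 : ℝ) * inner (𝕜 := ℝ) (u s) (A (A U))) t :=
        hfdiff.sub hφ.differentiableAt
      have hψ0 := hmin'.deriv_eq_zero
      have hfderiv : deriv (fun s => ‖A (u s)‖ ^ 2) t
          = 2 * inner (𝕜 := ℝ) u' (A (A U)) := by
        have hsub : deriv (fun s => ‖A (u s)‖ ^ 2 -
            (2 : ℝ) * inner (𝕜 := ℝ) (u s) (A (A U))) t
            = deriv (fun s => ‖A (u s)‖ ^ 2) t -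
              deriv (fun s => (2 : ℝ) * inner (𝕜 := ℝ) (u s) (A (A U))) t :=
          deriv_sub hfdiff hφ.differentiableAt
        rw [hψ0, hφ.deriv] at hsub
        linarith
      have hf : HasDerivAt (fun s => ‖A (u s)‖ ^ 2)
          (2 * inner (𝕜 := ℝ) u' (A (A U))) t := by
        rw [← hfderiv]; exact hfdiff.hasDerivAt
      have hq : HasDerivAt (fun s => ‖A (u s)‖ ^ 2 / ‖u s‖ ^ 2)
          ((2 * inner (𝕜 := ℝ) u' (A (A U)) * ‖U‖ ^ 2 -
            ‖A U‖ ^ 2 * (inner (𝕜 := ℝ) U u' + inner (𝕜 := ℝ) u' U)) / (‖U‖ ^ 2) ^ 2) t :=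
        hf.div hg hg0.ne'
      rw [hq.deriv]
      -- compute inner products
      have horthU : inner (𝕜 := ℝ) b U = (0:ℝ) := hB_orth U U
      have hAAU : inner (𝕜 := ℝ) (A (A U)) U = ‖A U‖ ^ 2 := by
        rw [hA_symm (A U) U, ← real_inner_self_eq_norm_sq, real_inner_comm]
      have e1 : inner (𝕜 := ℝ) u' U = -(ν * ‖A U‖ ^ 2) := by
        rw [hu'def, inner_neg_left, inner_add_left, real_inner_smul_left, hAAU, horthU]
        ring
      have e2 : inner (𝕜 := ℝ) U u' = -(ν * ‖A U‖ ^ 2) := by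
        rw [real_inner_comm]; exact e1
      have e3 : inner (𝕜 := ℝ) u' (A (A U)) =
          -(ν * ‖A (A U)‖ ^ 2) - inner (𝕜 := ℝ) b (A (A U)) := by
        rw [hu'def, inner_neg_left, inner_add_left, real_inner_smul_left,
          real_inner_self_eq_norm_sq]
        ring
      rw [e1, e2, e3]
      set a : ℝ := ‖A U‖ ^ 2 with hadef
      set g0 : ℝ := ‖U‖ ^ 2 with hg0def
      set N : ℝ := ‖A (A U)‖ with hN
      set m : ℝ := inner (𝕜 := ℝ) b (A (A U)) with hm0
      set nb : ℝ := ‖b‖ with hnb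
      set r : ℝ := ‖A (A U) - (a / g0) • U‖ with hr
      have hr2' : r ^ 2 * g0 = N ^ 2 * g0 - a ^ 2 := by
        have h1 := norm_sub_sq_real (A (A U)) ((a / g0) • U)
        have h2 : inner (𝕜 := ℝ) (A (A U)) ((a / g0) • U) = (a / g0) * a := by
          rw [real_inner_smul_right, hAAU]
        have h3 : ‖(a / g0) • U‖ ^ 2 = (a / g0) ^ 2 * g0 := by
          rw [norm_smul, mul_pow, Real.norm_eq_abs, sq_abs]
        rw [h2, h3] at h1
        have hgne : g0 ≠ 0 := hg0.ne'
        have key2 : r ^ 2 * g0 = N ^ 2 * g0 - 2 * (a / g0 * g0) * a + (a / g0 * g0) ^ 2 := by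
          rw [h1]; ring
        rw [div_mul_cancel₀ a hgne] at key2
        linarith [key2]
      have hw : m = inner (𝕜 := ℝ) b (A (A U) - (a / g0) • U) := by
        rw [inner_sub_right, real_inner_smul_right, horthU, hm0]
        ring
      have hmineq : -(nb * r) ≤ m := by
        rw [hw]
        have h5 := abs_real_inner_le_norm b (A (A U) - (a / g0) • U)
        have h6 := neg_abs_le (inner (𝕜 := ℝ) b (A (A U) - (a / g0) • U))
        rw [← hnb, ← hr] at h5
        linarith
      have h1 := mul_le_mul_of_nonneg_left hmineq
        (show (0:ℝ) ≤ 2 * ν * g0 by positivity)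
      have hsq3 : (0:ℝ) ≤ g0 * (2 * ν * r - nb) ^ 2 :=
        mul_nonneg hg0.le (sq_nonneg _)
      have key : ν * (2 * (-(ν * N ^ 2) - m) * g0 - a * (-(ν * a) + -(ν * a)))
          ≤ nb ^ 2 * g0 := by
        have hr4 : ν ^ 2 * (r ^ 2 * g0) = ν ^ 2 * (N ^ 2 * g0 - a ^ 2) := by rw [hr2']
        nlinarith [hr4, h1, hsq3, mul_nonneg (sq_nonneg nb) hg0.le]
      have hg2 : (0:ℝ) < g0 ^ 2 := pow_pos hg0 2
      rw [div_le_iff₀ hg2]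
      have hre : 1 / (ν * g0) * nb ^ 2 * g0 ^ 2 = nb ^ 2 * g0 / ν := by
        field_simp
      rw [hre, le_div_iff₀ hν]
      nlinarith [key]
    · rw [deriv_zero_of_not_differentiableAt hdiff]
      exact hRHS1
  exact ⟨hmain, hmain.trans hstep⟩
end

section
/- Suppose u solves u_t + uu_x + u_{xxx} = εq on the torus T, and ψ(·,t) ∈ H²_per(T) with ∫_T ψ² dx = 1 satisfies ψ_{xx} + (1/6)uψ = λψ for a time-dependent eigenvalue λ(t). Then λ'(t) = (ε/6) ∫_T ψ² q dx. In particular, if ε = 0 the eigenvalue λ is constant in time. -/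
open Set MeasureTheory intervalIntegral

section KdVAux

/-- Partial derivative in the first variable. -/
noncomputable def pd1 (F : ℝ → ℝ → ℝ) : ℝ → ℝ → ℝ :=
  fun t x => fderiv ℝ (fun p : ℝ × ℝ => F p.1 p.2) (t, x) (1, 0)

/-- Partial derivative in the second variable. -/
noncomputable def pd2 (F : ℝ → ℝ → ℝ) : ℝ → ℝ → ℝ :=
  fun t x => fderiv ℝ (fun p : ℝ × ℝ => F p.1 p.2) (t, x) (0, 1)

variable {F : ℝ → ℝ → ℝ}

lemma hasDerivAt_pd1 (hF : ContDiff ℝ (⊤ : ℕ∞) (fun p : ℝ × ℝ => F p.1 p.2)) (t x : ℝ) :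
    HasDerivAt (fun s => F s x) (pd1 F t x) t := by
  have h1 : HasFDerivAt (fun p : ℝ × ℝ => F p.1 p.2)
      (fderiv ℝ (fun p : ℝ × ℝ => F p.1 p.2) (t, x)) (t, x) :=
    (hF.differentiable (by simp) (t, x)).hasFDerivAt
  have h2 : HasDerivAt (fun s : ℝ => ((s, x) : ℝ × ℝ)) ((1 : ℝ), (0 : ℝ)) t :=
    (hasDerivAt_id t).prodMk (hasDerivAt_const t x)
  exact h1.comp_hasDerivAt t h2

lemma hasDerivAt_pd2 (hF : ContDiff ℝ (⊤ : ℕ∞) (fun p : ℝ × ℝ => F p.1 p.2)) (t x : ℝ) :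
    HasDerivAt (fun y => F t y) (pd2 F t x) x := by
  have h1 : HasFDerivAt (fun p : ℝ × ℝ => F p.1 p.2)
      (fderiv ℝ (fun p : ℝ × ℝ => F p.1 p.2) (t, x)) (t, x) :=
    (hF.differentiable (by simp) (t, x)).hasFDerivAt
  have h2 : HasDerivAt (fun y : ℝ => ((t, y) : ℝ × ℝ)) ((0 : ℝ), (1 : ℝ)) x :=
    (hasDerivAt_const x t).prodMk (hasDerivAt_id x)
  exact h1.comp_hasDerivAt x h2

lemma contDiff_pd1 (hF : ContDiff ℝ (⊤ : ℕ∞) (fun p : ℝ × ℝ => F p.1 p.2)) :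
    ContDiff ℝ (⊤ : ℕ∞) (fun p : ℝ × ℝ => pd1 F p.1 p.2) := by
  have h1 : ContDiff ℝ (⊤ : ℕ∞) (fderiv ℝ (fun p : ℝ × ℝ => F p.1 p.2)) := hF.fderiv_right (by simp)
  exact h1.clm_apply contDiff_const

lemma contDiff_pd2 (hF : ContDiff ℝ (⊤ : ℕ∞) (fun p : ℝ × ℝ => F p.1 p.2)) :
    ContDiff ℝ (⊤ : ℕ∞) (fun p : ℝ × ℝ => pd2 F p.1 p.2) := by
  have h1 : ContDiff ℝ (⊤ : ℕ∞) (fderiv ℝ (fun p : ℝ × ℝ => F p.1 p.2)) := hF.fderiv_right (by simp)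
  exact h1.clm_apply contDiff_const

lemma cont_slice' (hF : Continuous (fun p : ℝ × ℝ => F p.1 p.2)) (t : ℝ) :
    Continuous (fun x => F t x) :=
  hF.comp (continuous_const.prodMk continuous_id)

lemma cont_slice (hF : ContDiff ℝ (⊤ : ℕ∞) (fun p : ℝ × ℝ => F p.1 p.2)) (t : ℝ) :
    Continuous (fun x => F t x) :=
  cont_slice' hF.continuous t

/-- Clairaut's theorem for smooth functions of two real variables. -/
lemma pd1_pd2_comm (hF : ContDiff ℝ (⊤ : ℕ∞) (fun p : ℝ × ℝ => F p.1 p.2)) (t x : ℝ) :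
    pd1 (pd2 F) t x = pd2 (pd1 F) t x := by
  have hdf : ContDiff ℝ (⊤ : ℕ∞) (fderiv ℝ (fun p : ℝ × ℝ => F p.1 p.2)) := hF.fderiv_right (by simp)
  have hd : DifferentiableAt ℝ (fderiv ℝ (fun p : ℝ × ℝ => F p.1 p.2)) (t, x) :=
    hdf.differentiable (by simp) (t, x)
  have hsymm : IsSymmSndFDerivAt ℝ (fun p : ℝ × ℝ => F p.1 p.2) (t, x) :=
    hF.contDiffAt.isSymmSndFDerivAt (by rw [minSmoothness_of_isRCLikeNormedField]; exact WithTop.coe_le_coe.mpr le_top)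
  have key : ∀ v w : ℝ × ℝ,
      fderiv ℝ (fun p : ℝ × ℝ => fderiv ℝ (fun p : ℝ × ℝ => F p.1 p.2) p v) (t, x) w
        = fderiv ℝ (fderiv ℝ (fun p : ℝ × ℝ => F p.1 p.2)) (t, x) w v := by
    intro v w
    have h := ((ContinuousLinearMap.apply ℝ ℝ v).hasFDerivAt).comp (t, x) hd.hasFDerivAt
    have heq : (fun p : ℝ × ℝ => fderiv ℝ (fun p : ℝ × ℝ => F p.1 p.2) p v)
        = (ContinuousLinearMap.apply ℝ ℝ v) ∘ (fderiv ℝ (fun p : ℝ × ℝ => F p.1 p.2)) := rfl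
    rw [heq, h.fderiv]
    rfl
  have e1 : pd1 (pd2 F) t x
      = fderiv ℝ (fun p : ℝ × ℝ => fderiv ℝ (fun p : ℝ × ℝ => F p.1 p.2) p ((0 : ℝ), (1 : ℝ)))
          (t, x) ((1 : ℝ), (0 : ℝ)) := rfl
  have e2 : pd2 (pd1 F) t x
      = fderiv ℝ (fun p : ℝ × ℝ => fderiv ℝ (fun p : ℝ × ℝ => F p.1 p.2) p ((1 : ℝ), (0 : ℝ)))
          (t, x) ((0 : ℝ), (1 : ℝ)) := rfl
  rw [e1, e2, key, key]
  exact hsymm.eq _ _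

/-- Differentiation under the interval integral for parameters. -/
lemma hasDerivAt_intervalIntegral_param {F F' : ℝ → ℝ → ℝ}
    (hF : ContDiff ℝ (⊤ : ℕ∞) (fun p : ℝ × ℝ => F p.1 p.2))
    (hF' : Continuous (fun p : ℝ × ℝ => F' p.1 p.2))
    (hd : ∀ s x, HasDerivAt (fun r => F r x) (F' s x) s) (a b t₀ : ℝ) :
    HasDerivAt (fun t => ∫ x in a..b, F t x) (∫ x in a..b, F' t₀ x) t₀ := by
  have hK : IsCompact (Metric.closedBall t₀ 1 ×ˢ Set.uIcc a b) :=
    (isCompact_closedBall t₀ 1).prod isCompact_uIcc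
  obtain ⟨C, hC⟩ := hK.exists_bound_of_continuousOn hF'.continuousOn
  refine (intervalIntegral.hasDerivAt_integral_of_dominated_loc_of_deriv_le
    (F := F) (F' := F') (bound := fun _ => C) (Metric.ball_mem_nhds t₀ zero_lt_one) ?_ ?_ ?_ ?_ ?_ ?_).2
  · exact Filter.Eventually.of_forall fun t => (cont_slice hF t).aestronglyMeasurable
  · exact (cont_slice hF t₀).intervalIntegrable a b
  · exact (cont_slice' hF' t₀).aestronglyMeasurable
  · refine Filter.Eventually.of_forall fun x hx => fun s hs => ?_
    have : ((s, x) : ℝ × ℝ) ∈ Metric.closedBall t₀ 1 ×ˢ Set.uIcc a b :=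
      ⟨Metric.ball_subset_closedBall hs, Set.uIoc_subset_uIcc hx⟩
    exact hC (s, x) this
  · exact intervalIntegrable_const
  · exact Filter.Eventually.of_forall fun x _ => fun s _ => hd s x

end KdVAux

/-- Evolution of an eigenvalue of the Schrödinger operator `∂ₓₓ + u/6` along a
solution of the perturbed KdV equation `u_t + uu_x + u_{xxx} = εq`: if
`ψ(·,t) ∈ H²_per` is a normalized eigenfunction with eigenvalue `λ(t)`, then
`λ'(t) = (ε/6)∫ψ²q dx`; in particular for `ε = 0` the eigenvalue is constant in
time (Gardner-Greene-Kruskal-Miura). -/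
theorem perturbed_KdV_eigenvalue_evolution
    (L ε : ℝ) (hL : 0 < L)
    (u q ψ : ℝ → ℝ → ℝ) (lam : ℝ → ℝ)
    (hu_smooth : ContDiff ℝ (⊤ : ℕ∞) (fun p : ℝ × ℝ => u p.1 p.2))
    (hq_smooth : ContDiff ℝ (⊤ : ℕ∞) (fun p : ℝ × ℝ => q p.1 p.2))
    (hψ_smooth : ContDiff ℝ (⊤ : ℕ∞) (fun p : ℝ × ℝ => ψ p.1 p.2))
    (hu_per : ∀ t, Function.Periodic (fun x => u t x) L)
    (hq_per : ∀ t, Function.Periodic (fun x => q t x) L)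
    (hψ_per : ∀ t, Function.Periodic (fun x => ψ t x) L)
    (hnorm : ∀ t, (∫ x in (-(L/2))..(L/2), (ψ t x) ^ 2) = 1)
    (hpde : ∀ t x, deriv (fun s => u s x) t + u t x * deriv (fun y => u t y) x +
      iteratedDeriv 3 (fun y => u t y) x = ε * q t x)
    (heigen : ∀ t x, iteratedDeriv 2 (fun y => ψ t y) x + (1/6) * u t x * ψ t x =
      lam t * ψ t x) :
    (∀ t, HasDerivAt lam
        ((ε / 6) * ∫ x in (-(L/2))..(L/2), (ψ t x) ^ 2 * q t x) t) ∧
    (ε = 0 → ∀ s t, lam s = lam t) := by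
  -- smoothness of the various partial derivatives
  have hψx := contDiff_pd2 hψ_smooth
  have hψxx := contDiff_pd2 hψx
  have hψxxx := contDiff_pd2 hψxx
  have hψt := contDiff_pd1 hψ_smooth
  have hψtx := contDiff_pd2 hψt
  have hψtxx := contDiff_pd2 hψtx
  have hψxxt := contDiff_pd1 hψxx
  have hux := contDiff_pd2 hu_smooth
  have huxx := contDiff_pd2 hux
  have huxxx := contDiff_pd2 huxx
  have hut := contDiff_pd1 hu_smooth
  -- iterated derivative bridges
  have hiter2 : ∀ t x, iteratedDeriv 2 (fun y => ψ t y) x = pd2 (pd2 ψ) t x := by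
    intro t x
    rw [show (2 : ℕ) = 1 + 1 from rfl, iteratedDeriv_succ, iteratedDeriv_one]
    have h : deriv (fun y => ψ t y) = fun y => pd2 ψ t y :=
      funext fun y => (hasDerivAt_pd2 hψ_smooth t y).deriv
    rw [h]
    exact (hasDerivAt_pd2 hψx t x).deriv
  have hiter3 : ∀ t x, iteratedDeriv 3 (fun y => u t y) x = pd2 (pd2 (pd2 u)) t x := by
    intro t x
    rw [show (3 : ℕ) = 2 + 1 from rfl, iteratedDeriv_succ,
      show (2 : ℕ) = 1 + 1 from rfl, iteratedDeriv_succ, iteratedDeriv_one]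
    have h : deriv (fun y => u t y) = fun y => pd2 u t y :=
      funext fun y => (hasDerivAt_pd2 hu_smooth t y).deriv
    rw [h]
    have h2 : deriv (fun y => pd2 u t y) = fun y => pd2 (pd2 u) t y :=
      funext fun y => (hasDerivAt_pd2 hux t y).deriv
    rw [h2]
    exact (hasDerivAt_pd2 huxx t x).deriv
  -- the eigen equation and its x-derivative, PDE, in pd-form
  have heigen' : ∀ t x, pd2 (pd2 ψ) t x = lam t * ψ t x - 1/6 * u t x * ψ t x := by
    intro t x
    have h := heigen t x
    rw [hiter2] at h
    linarith
  have heigenx : ∀ t x, pd2 (pd2 (pd2 ψ)) t x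
      = lam t * pd2 ψ t x - 1/6 * (pd2 u t x * ψ t x + u t x * pd2 ψ t x) := by
    intro t x
    have h1 : HasDerivAt (fun y => pd2 (pd2 ψ) t y) (pd2 (pd2 (pd2 ψ)) t x) x :=
      hasDerivAt_pd2 hψxx t x
    have hψ' := hasDerivAt_pd2 hψ_smooth t x
    have hu' := hasDerivAt_pd2 hu_smooth t x
    have h2 : HasDerivAt (fun y => lam t * ψ t y - 1/6 * u t y * ψ t y)
        (lam t * pd2 ψ t x - 1/6 * (pd2 u t x * ψ t x + u t x * pd2 ψ t x)) x := by
      have h3 := (hψ'.const_mul (lam t)).sub ((hu'.const_mul (1/6)).mul hψ')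
      refine h3.congr_deriv ?_
      ring
    have h4 : (fun y => pd2 (pd2 ψ) t y) = fun y => lam t * ψ t y - 1/6 * u t y * ψ t y :=
      funext fun y => heigen' t y
    rw [h4] at h1
    exact h1.unique h2
  have hpde' : ∀ t x, pd1 u t x
      = ε * q t x - u t x * pd2 u t x - pd2 (pd2 (pd2 u)) t x := by
    intro t x
    have h := hpde t x
    rw [hiter3, (hasDerivAt_pd1 hu_smooth t x).deriv, (hasDerivAt_pd2 hu_smooth t x).deriv] at h
    linarith
  -- commutation of mixed partials
  have hcomm1 : ∀ t x, pd1 (pd2 ψ) t x = pd2 (pd1 ψ) t x := pd1_pd2_comm hψ_smooth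
  have hcomm2 : ∀ t x, pd1 (pd2 (pd2 ψ)) t x = pd2 (pd2 (pd1 ψ)) t x := by
    intro t x
    rw [pd1_pd2_comm hψx t x]
    rw [← (hasDerivAt_pd2 (contDiff_pd1 hψx) t x).deriv, ← (hasDerivAt_pd2 hψtx t x).deriv]
    congr 1
    funext y
    exact hcomm1 t y
  -- periodicity (in beta-reduced form)
  have hψp : ∀ t x, ψ t (x + L) = ψ t x := fun t x => hψ_per t x
  have hup : ∀ t x, u t (x + L) = u t x := fun t x => hu_per t x
  have pd2_per : ∀ (G : ℝ → ℝ → ℝ), ContDiff ℝ (⊤ : ℕ∞) (fun p : ℝ × ℝ => G p.1 p.2) →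
      (∀ t x, G t (x + L) = G t x) → ∀ t x, pd2 G t (x + L) = pd2 G t x := by
    intro G hG hGp t x
    rw [← (hasDerivAt_pd2 hG t (x + L)).deriv, ← (hasDerivAt_pd2 hG t x).deriv]
    rw [← deriv_comp_add_const (fun y => G t y) L x]
    congr 1
    funext y
    exact hGp t y
  have pd1_per : ∀ (G : ℝ → ℝ → ℝ), ContDiff ℝ (⊤ : ℕ∞) (fun p : ℝ × ℝ => G p.1 p.2) →
      (∀ t x, G t (x + L) = G t x) → ∀ t x, pd1 G t (x + L) = pd1 G t x := by
    intro G hG hGp t x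
    rw [← (hasDerivAt_pd1 hG t (x + L)).deriv, ← (hasDerivAt_pd1 hG t x).deriv]
    congr 1
    funext s
    exact hGp s x
  have hψxp := pd2_per ψ hψ_smooth hψp
  have hψxxp := pd2_per (pd2 ψ) hψx hψxp
  have hψtp := pd1_per ψ hψ_smooth hψp
  have hψtxp := pd2_per (pd1 ψ) hψt hψtp
  have huxp := pd2_per u hu_smooth hup
  have huxxp := pd2_per (pd2 u) hux huxp
  -- ∫ ψ ψ_t = 0
  have hzero : ∀ t₀, (∫ x in (-(L/2))..(L/2), ψ t₀ x * pd1 ψ t₀ x) = 0 := by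
    intro t₀
    have hd : ∀ s x, HasDerivAt (fun r => ψ r x ^ 2) (2 * (ψ s x * pd1 ψ s x)) s := by
      intro s x
      have h := (hasDerivAt_pd1 hψ_smooth s x).pow 2
      refine h.congr_deriv ?_
      all_goals (push_cast; ring)
    have hcont : Continuous (fun p : ℝ × ℝ => 2 * (ψ p.1 p.2 * pd1 ψ p.1 p.2)) :=
      continuous_const.mul (hψ_smooth.continuous.mul hψt.continuous)
    have h := hasDerivAt_intervalIntegral_param (F := fun t x => ψ t x ^ 2)
      (F' := fun t x => 2 * (ψ t x * pd1 ψ t x)) (hψ_smooth.pow 2) hcont hd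
      (-(L/2)) (L/2) t₀
    have heq : (fun t => ∫ x in (-(L/2))..(L/2), ψ t x ^ 2) = fun _ => (1 : ℝ) :=
      funext fun t => hnorm t
    rw [heq] at h
    have h0 := h.unique (hasDerivAt_const t₀ 1)
    rw [intervalIntegral.integral_const_mul] at h0
    linarith
  -- the main derivative computation
  have main : ∀ t₀, HasDerivAt lam
      ((ε / 6) * ∫ x in (-(L/2))..(L/2), (ψ t₀ x) ^ 2 * q t₀ x) t₀ := by
    intro t₀
    -- derivative of lam via differentiating the integral of ψ * ψxx + 1/6 u ψ²
    have hGsm : ContDiff ℝ (⊤ : ℕ∞) (fun p : ℝ × ℝ =>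
        ψ p.1 p.2 * pd2 (pd2 ψ) p.1 p.2 + 1/6 * u p.1 p.2 * ψ p.1 p.2 ^ 2) :=
      (hψ_smooth.mul hψxx).add ((contDiff_const.mul hu_smooth).mul (hψ_smooth.pow 2))
    have hDcont : Continuous (fun p : ℝ × ℝ =>
        pd1 ψ p.1 p.2 * pd2 (pd2 ψ) p.1 p.2 + ψ p.1 p.2 * pd1 (pd2 (pd2 ψ)) p.1 p.2
          + (1/6 * pd1 u p.1 p.2 * ψ p.1 p.2 ^ 2
            + 1/6 * u p.1 p.2 * (2 * ψ p.1 p.2 ^ 1 * pd1 ψ p.1 p.2))) :=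
      ((hψt.continuous.mul hψxx.continuous).add
          (hψ_smooth.continuous.mul hψxxt.continuous)).add
        (((continuous_const.mul hut.continuous).mul (hψ_smooth.continuous.pow 2)).add
          ((continuous_const.mul hu_smooth.continuous).mul
            ((continuous_const.mul (hψ_smooth.continuous.pow 1)).mul hψt.continuous)))
    have hd : ∀ s x, HasDerivAt
        (fun r => ψ r x * pd2 (pd2 ψ) r x + 1/6 * u r x * ψ r x ^ 2)
        (pd1 ψ s x * pd2 (pd2 ψ) s x + ψ s x * pd1 (pd2 (pd2 ψ)) s x
          + (1/6 * pd1 u s x * ψ s x ^ 2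
            + 1/6 * u s x * (2 * ψ s x ^ 1 * pd1 ψ s x))) s := by
      intro s x
      have h1 := hasDerivAt_pd1 hψ_smooth s x
      have h2 := hasDerivAt_pd1 hψxx s x
      have h3 := hasDerivAt_pd1 hu_smooth s x
      have H := (h1.mul h2).add ((h3.const_mul (1/6)).mul (h1.pow 2))
      refine H.congr_deriv ?_
      all_goals (push_cast [Pi.pow_apply]; ring)
    have h := hasDerivAt_intervalIntegral_param hGsm hDcont hd (-(L/2)) (L/2) t₀
    have heq : (fun t => ∫ x in (-(L/2))..(L/2),
        (ψ t x * pd2 (pd2 ψ) t x + 1/6 * u t x * ψ t x ^ 2)) = lam := by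
      funext t
      have hpt : ∀ x, ψ t x * pd2 (pd2 ψ) t x + 1/6 * u t x * ψ t x ^ 2
          = lam t * ψ t x ^ 2 := by
        intro x
        rw [heigen' t x]
        ring
      rw [intervalIntegral.integral_congr (g := fun x => lam t * ψ t x ^ 2)
        (fun x _ => hpt x), intervalIntegral.integral_const_mul, hnorm t, mul_one]
    rw [heq] at h
    -- now compute the integral of the derivative via the flux function
    have hflux : ∀ x, HasDerivAt (fun x =>
        ψ t₀ x * pd2 (pd1 ψ) t₀ x - pd2 ψ t₀ x * pd1 ψ t₀ x
          - 1/6 * (pd2 (pd2 u) t₀ x * ψ t₀ x ^ 2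
            - pd2 u t₀ x * (2 * ψ t₀ x * pd2 ψ t₀ x)
            + u t₀ x * (2 * pd2 ψ t₀ x ^ 2 + 2 * ψ t₀ x * pd2 (pd2 ψ) t₀ x)
            + 2/3 * u t₀ x ^ 2 * ψ t₀ x ^ 2
            - 24 * lam t₀ ^ 2 * ψ t₀ x ^ 2
            + 24 * lam t₀ * pd2 ψ t₀ x ^ 2))
        ((pd1 ψ t₀ x * pd2 (pd2 ψ) t₀ x + ψ t₀ x * pd1 (pd2 (pd2 ψ)) t₀ x
          + (1/6 * pd1 u t₀ x * ψ t₀ x ^ 2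
            + 1/6 * u t₀ x * (2 * ψ t₀ x ^ 1 * pd1 ψ t₀ x)))
          - ε / 6 * (ψ t₀ x ^ 2 * q t₀ x)
          - 2 * lam t₀ * (ψ t₀ x * pd1 ψ t₀ x)) x := by
      intro x
      have hψ' := hasDerivAt_pd2 hψ_smooth t₀ x
      have hψx' := hasDerivAt_pd2 hψx t₀ x
      have hψxx' := hasDerivAt_pd2 hψxx t₀ x
      have hψt' := hasDerivAt_pd2 hψt t₀ x
      have hψtx' := hasDerivAt_pd2 hψtx t₀ x
      have hu' := hasDerivAt_pd2 hu_smooth t₀ x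
      have hux' := hasDerivAt_pd2 hux t₀ x
      have huxx' := hasDerivAt_pd2 huxx t₀ x
      have H := ((hψ'.mul hψtx').sub (hψx'.mul hψt')).sub
        (((((((huxx'.mul (hψ'.pow 2)).sub
            (hux'.mul ((hψ'.const_mul 2).mul hψx'))).add
          (hu'.mul (((hψx'.pow 2).const_mul 2).add ((hψ'.const_mul 2).mul hψxx')))).add
          (((hu'.pow 2).const_mul (2/3)).mul (hψ'.pow 2))).sub
          ((hψ'.pow 2).const_mul (24 * lam t₀ ^ 2))).add
          ((hψx'.pow 2).const_mul (24 * lam t₀))).const_mul (1/6))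
      refine H.congr_deriv ?_
      all_goals (
        simp only [hcomm2 t₀ x, hpde' t₀ x, heigenx t₀ x, heigen' t₀ x, Pi.pow_apply, Pi.mul_apply,
          Pi.add_apply, Pi.sub_apply]
        push_cast
        ring)
    have hgcont : Continuous (fun x =>
        (pd1 ψ t₀ x * pd2 (pd2 ψ) t₀ x + ψ t₀ x * pd1 (pd2 (pd2 ψ)) t₀ x
          + (1/6 * pd1 u t₀ x * ψ t₀ x ^ 2
            + 1/6 * u t₀ x * (2 * ψ t₀ x ^ 1 * pd1 ψ t₀ x)))
          - ε / 6 * (ψ t₀ x ^ 2 * q t₀ x)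
          - 2 * lam t₀ * (ψ t₀ x * pd1 ψ t₀ x)) := by
      have c1 : Continuous (fun x => pd1 ψ t₀ x) := cont_slice hψt t₀
      have c2 : Continuous (fun x => pd2 (pd2 ψ) t₀ x) := cont_slice hψxx t₀
      have c3 : Continuous (fun x => ψ t₀ x) := cont_slice hψ_smooth t₀
      have c4 : Continuous (fun x => pd1 (pd2 (pd2 ψ)) t₀ x) := cont_slice hψxxt t₀
      have c5 : Continuous (fun x => pd1 u t₀ x) := cont_slice hut t₀
      have c6 : Continuous (fun x => u t₀ x) := cont_slice hu_smooth t₀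
      have c7 : Continuous (fun x => q t₀ x) := cont_slice hq_smooth t₀
      exact (((c1.mul c2).add (c3.mul c4)).add
          (((continuous_const.mul c5).mul (c3.pow 2)).add
            ((continuous_const.mul c6).mul
              ((continuous_const.mul (c3.pow 1)).mul c1)))).sub
        ((continuous_const.mul ((c3.pow 2).mul c7))) |>.sub
        (continuous_const.mul (c3.mul c1))
    have hFTC := intervalIntegral.integral_eq_sub_of_hasDerivAt
      (f' := fun x =>
        (pd1 ψ t₀ x * pd2 (pd2 ψ) t₀ x + ψ t₀ x * pd1 (pd2 (pd2 ψ)) t₀ x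
          + (1/6 * pd1 u t₀ x * ψ t₀ x ^ 2
            + 1/6 * u t₀ x * (2 * ψ t₀ x ^ 1 * pd1 ψ t₀ x)))
          - ε / 6 * (ψ t₀ x ^ 2 * q t₀ x)
          - 2 * lam t₀ * (ψ t₀ x * pd1 ψ t₀ x))
      (a := -(L/2)) (b := L/2)
      (fun x _ => hflux x) (hgcont.intervalIntegrable _ _)
    have hper : (fun x =>
        ψ t₀ x * pd2 (pd1 ψ) t₀ x - pd2 ψ t₀ x * pd1 ψ t₀ x
          - 1/6 * (pd2 (pd2 u) t₀ x * ψ t₀ x ^ 2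
            - pd2 u t₀ x * (2 * ψ t₀ x * pd2 ψ t₀ x)
            + u t₀ x * (2 * pd2 ψ t₀ x ^ 2 + 2 * ψ t₀ x * pd2 (pd2 ψ) t₀ x)
            + 2/3 * u t₀ x ^ 2 * ψ t₀ x ^ 2
            - 24 * lam t₀ ^ 2 * ψ t₀ x ^ 2
            + 24 * lam t₀ * pd2 ψ t₀ x ^ 2)) (L/2)
      = (fun x =>
        ψ t₀ x * pd2 (pd1 ψ) t₀ x - pd2 ψ t₀ x * pd1 ψ t₀ x
          - 1/6 * (pd2 (pd2 u) t₀ x * ψ t₀ x ^ 2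
            - pd2 u t₀ x * (2 * ψ t₀ x * pd2 ψ t₀ x)
            + u t₀ x * (2 * pd2 ψ t₀ x ^ 2 + 2 * ψ t₀ x * pd2 (pd2 ψ) t₀ x)
            + 2/3 * u t₀ x ^ 2 * ψ t₀ x ^ 2
            - 24 * lam t₀ ^ 2 * ψ t₀ x ^ 2
            + 24 * lam t₀ * pd2 ψ t₀ x ^ 2)) (-(L/2)) := by
      have key : ∀ z : ℝ, (fun x =>
        ψ t₀ x * pd2 (pd1 ψ) t₀ x - pd2 ψ t₀ x * pd1 ψ t₀ x
          - 1/6 * (pd2 (pd2 u) t₀ x * ψ t₀ x ^ 2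
            - pd2 u t₀ x * (2 * ψ t₀ x * pd2 ψ t₀ x)
            + u t₀ x * (2 * pd2 ψ t₀ x ^ 2 + 2 * ψ t₀ x * pd2 (pd2 ψ) t₀ x)
            + 2/3 * u t₀ x ^ 2 * ψ t₀ x ^ 2
            - 24 * lam t₀ ^ 2 * ψ t₀ x ^ 2
            + 24 * lam t₀ * pd2 ψ t₀ x ^ 2)) (z + L) = (fun x =>
        ψ t₀ x * pd2 (pd1 ψ) t₀ x - pd2 ψ t₀ x * pd1 ψ t₀ x
          - 1/6 * (pd2 (pd2 u) t₀ x * ψ t₀ x ^ 2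
            - pd2 u t₀ x * (2 * ψ t₀ x * pd2 ψ t₀ x)
            + u t₀ x * (2 * pd2 ψ t₀ x ^ 2 + 2 * ψ t₀ x * pd2 (pd2 ψ) t₀ x)
            + 2/3 * u t₀ x ^ 2 * ψ t₀ x ^ 2
            - 24 * lam t₀ ^ 2 * ψ t₀ x ^ 2
            + 24 * lam t₀ * pd2 ψ t₀ x ^ 2)) z := by
        intro z
        simp only [hψp, hup, hψxp, hψxxp, hψtp, hψtxp, huxp, huxxp]
      have h2 := key (-(L/2))
      rw [show (-(L/2) + L : ℝ) = L/2 from by ring] at h2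
      exact h2
    beta_reduce at hper
    rw [hper, sub_self] at hFTC
    -- split the integral
    have hi1 : IntervalIntegrable (fun x =>
        pd1 ψ t₀ x * pd2 (pd2 ψ) t₀ x + ψ t₀ x * pd1 (pd2 (pd2 ψ)) t₀ x
          + (1/6 * pd1 u t₀ x * ψ t₀ x ^ 2
            + 1/6 * u t₀ x * (2 * ψ t₀ x ^ 1 * pd1 ψ t₀ x)))
        volume (-(L/2)) (L/2) := by
      apply Continuous.intervalIntegrable
      exact ((cont_slice hψt t₀).mul (cont_slice hψxx t₀)).add
          ((cont_slice hψ_smooth t₀).mul (cont_slice hψxxt t₀)) |>.add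
        (((continuous_const.mul (cont_slice hut t₀)).mul
            ((cont_slice hψ_smooth t₀).pow 2)).add
          ((continuous_const.mul (cont_slice hu_smooth t₀)).mul
            ((continuous_const.mul ((cont_slice hψ_smooth t₀).pow 1)).mul
              (cont_slice hψt t₀))))
    have hi2 : IntervalIntegrable (fun x => ε / 6 * (ψ t₀ x ^ 2 * q t₀ x))
        volume (-(L/2)) (L/2) := by
      apply Continuous.intervalIntegrable
      exact continuous_const.mul (((cont_slice hψ_smooth t₀).pow 2).mul
        (cont_slice hq_smooth t₀))
    have hi3 : IntervalIntegrable (fun x => 2 * lam t₀ * (ψ t₀ x * pd1 ψ t₀ x))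
        volume (-(L/2)) (L/2) := by
      apply Continuous.intervalIntegrable
      exact continuous_const.mul ((cont_slice hψ_smooth t₀).mul (cont_slice hψt t₀))
    rw [intervalIntegral.integral_sub (hi1.sub hi2) hi3,
      intervalIntegral.integral_sub hi1 hi2,
      intervalIntegral.integral_const_mul, intervalIntegral.integral_const_mul] at hFTC
    rw [hzero t₀, mul_zero, sub_zero] at hFTC
    have hval : (∫ x in (-(L/2))..(L/2),
        (pd1 ψ t₀ x * pd2 (pd2 ψ) t₀ x + ψ t₀ x * pd1 (pd2 (pd2 ψ)) t₀ x
          + (1/6 * pd1 u t₀ x * ψ t₀ x ^ 2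
            + 1/6 * u t₀ x * (2 * ψ t₀ x ^ 1 * pd1 ψ t₀ x))))
        = ε / 6 * ∫ x in (-(L/2))..(L/2), (ψ t₀ x) ^ 2 * q t₀ x := by
      linarith [hFTC]
    rw [← hval]
    exact h
  exact ⟨main, by
    intro hε s t
    have hd : ∀ r, HasDerivAt lam 0 r := by
      intro r
      have h := main r
      rw [hε] at h
      simpa using h
    exact is_const_of_deriv_eq_zero (fun r => (hd r).differentiableAt)
      (fun r => (hd r).deriv) s t⟩
end
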